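/- arXiv:2504.02276 — 10 statements merged into one kernel-verified Lean document; each statement's English description precedes it below -/
import Mathlib

section
/- Let $\Delta_k$ and $\Delta_m$ be simplices in $\mathbb{R}^n$ with vertex sets $\{v_1,\ldots,v_{k+1}\}$ and $\{w_1,\ldots,w_{m+1}\}$ and circumradii $R_v$ and $R_w$ respectively. If $\Delta_k \cap \Delta_m \neq \emptyset$, then there exist indices $i,j$ such that $d(v_i, w_j) \leq \sqrt{R_v^2 + R_w^2}$. -/
open Metric Set RealInnerProductSpace

/-- Variance-type identity: for a convex combination `x = ∑ a i • p i`,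
`∑ a i * ‖p i - c‖² = ∑ a i * ‖p i - x‖² + ‖x - c‖²`. -/
lemma sum_mul_norm_sub_sq_eq {E : Type*} [NormedAddCommGroup E] [InnerProductSpace ℝ E]
    {ι : Type*} [Fintype ι] (a : ι → ℝ) (p : ι → E) (x c : E)
    (ha : ∑ i, a i = 1) (hx : ∑ i, a i • p i = x) :
    ∑ i, a i * ‖p i - c‖ ^ 2 = (∑ i, a i * ‖p i - x‖ ^ 2) + ‖x - c‖ ^ 2 := by
  have hz : ∑ i, a i • (p i - x) = 0 := by
    simp_rw [smul_sub]
    rw [Finset.sum_sub_distrib, hx, ← Finset.sum_smul, ha, one_smul, sub_self]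
  have key : ∀ i, a i * ‖p i - c‖ ^ 2 =
      a i * ‖p i - x‖ ^ 2 + 2 * ⟪a i • (p i - x), x - c⟫ + a i * ‖x - c‖ ^ 2 := by
    intro i
    have h1 : p i - c = (p i - x) + (x - c) := by abel
    rw [h1, norm_add_sq_real, real_inner_smul_left]
    ring
  calc ∑ i, a i * ‖p i - c‖ ^ 2
      = ∑ i, (a i * ‖p i - x‖ ^ 2 + 2 * ⟪a i • (p i - x), x - c⟫ + a i * ‖x - c‖ ^ 2) := by
        simp_rw [key]
    _ = (∑ i, a i * ‖p i - x‖ ^ 2) + 2 * ⟪∑ i, a i • (p i - x), x - c⟫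
          + (∑ i, a i) * ‖x - c‖ ^ 2 := by
        rw [Finset.sum_add_distrib, Finset.sum_add_distrib, sum_inner, ← Finset.sum_mul,
          ← Finset.mul_sum]
    _ = (∑ i, a i * ‖p i - x‖ ^ 2) + ‖x - c‖ ^ 2 := by
        rw [hz, ha, inner_zero_left]; ring

/-- From membership in the convex hull of a range over a fintype, obtain weights over the
whole fintype. -/
lemma exists_weights_of_mem_convexHull_range {E : Type*} [NormedAddCommGroup E]
    [NormedSpace ℝ E] {ι : Type*} [Fintype ι] (p : ι → E) {x : E}
    (hx : x ∈ convexHull ℝ (Set.range p)) :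
    ∃ a : ι → ℝ, (∀ i, 0 ≤ a i) ∧ ∑ i, a i = 1 ∧ ∑ i, a i • p i = x := by
  classical
  rw [convexHull_range_eq_exists_affineCombination] at hx
  obtain ⟨s, a, ha0, ha1, hax⟩ := hx
  refine ⟨fun i => if i ∈ s then a i else 0, fun i => ?_, ?_, ?_⟩
  · dsimp only
    split_ifs with h
    exacts [ha0 _ h, le_rfl]
  · rw [Finset.sum_ite_mem, Finset.univ_inter, ha1]
  · rw [← hax, Finset.affineCombination_eq_linear_combination s p a ha1]
    simp_rw [ite_smul, zero_smul]
    rw [Finset.sum_ite_mem, Finset.univ_inter]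

theorem stmt0 (n k m : ℕ)
    (v : Fin (k + 1) → EuclideanSpace ℝ (Fin n))
    (w : Fin (m + 1) → EuclideanSpace ℝ (Fin n))
    (hv : AffineIndependent ℝ v) (hw : AffineIndependent ℝ w)
    (Rv Rw : ℝ)
    (hRv : IsLeast {R : ℝ | ∃ c, convexHull ℝ (Set.range v) ⊆ Metric.closedBall c R} Rv)
    (hRw : IsLeast {R : ℝ | ∃ c, convexHull ℝ (Set.range w) ⊆ Metric.closedBall c R} Rw)
    (hint : (convexHull ℝ (Set.range v) ∩ convexHull ℝ (Set.range w)).Nonempty) :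
    ∃ i j, dist (v i) (w j) ≤ Real.sqrt (Rv ^ 2 + Rw ^ 2) := by
  obtain ⟨x, hxv, hxw⟩ := hint
  obtain ⟨a, ha0, ha1, hax⟩ := exists_weights_of_mem_convexHull_range v hxv
  obtain ⟨b, hb0, hb1, hbx⟩ := exists_weights_of_mem_convexHull_range w hxw
  obtain ⟨cv, hcv⟩ := hRv.1
  obtain ⟨cw, hcw⟩ := hRw.1
  -- bounds on weighted second moments about x
  have hvbound : ∑ i, a i * ‖v i - x‖ ^ 2 ≤ Rv ^ 2 := by
    have h := sum_mul_norm_sub_sq_eq a v x cv ha1 hax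
    have h2 : ∑ i, a i * ‖v i - cv‖ ^ 2 ≤ ∑ i, a i * Rv ^ 2 := by
      refine Finset.sum_le_sum fun i _ => mul_le_mul_of_nonneg_left ?_ (ha0 i)
      have : v i ∈ Metric.closedBall cv Rv :=
        hcv (subset_convexHull ℝ _ (Set.mem_range_self i))
      have hd : ‖v i - cv‖ ≤ Rv := by
        simpa [dist_eq_norm] using this
      exact pow_le_pow_left₀ (norm_nonneg _) hd 2
    rw [← Finset.sum_mul, ha1, one_mul] at h2
    nlinarith [sq_nonneg ‖x - cv‖]
  have hwbound : ∑ j, b j * ‖w j - x‖ ^ 2 ≤ Rw ^ 2 := by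
    have h := sum_mul_norm_sub_sq_eq b w x cw hb1 hbx
    have h2 : ∑ j, b j * ‖w j - cw‖ ^ 2 ≤ ∑ j, b j * Rw ^ 2 := by
      refine Finset.sum_le_sum fun j _ => mul_le_mul_of_nonneg_left ?_ (hb0 j)
      have : w j ∈ Metric.closedBall cw Rw :=
        hcw (subset_convexHull ℝ _ (Set.mem_range_self j))
      have hd : ‖w j - cw‖ ≤ Rw := by
        simpa [dist_eq_norm] using this
      exact pow_le_pow_left₀ (norm_nonneg _) hd 2
    rw [← Finset.sum_mul, hb1, one_mul] at h2
    nlinarith [sq_nonneg ‖x - cw‖]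
  -- the main identity: weighted average of squared distances
  have hmain : ∑ i, ∑ j, (a i * b j) * ‖v i - w j‖ ^ 2 ≤ Rv ^ 2 + Rw ^ 2 := by
    have step : ∀ i, ∑ j, b j * ‖w j - v i‖ ^ 2
        = (∑ j, b j * ‖w j - x‖ ^ 2) + ‖x - v i‖ ^ 2 :=
      fun i => sum_mul_norm_sub_sq_eq b w x (v i) hb1 hbx
    have expand : ∑ i, ∑ j, (a i * b j) * ‖v i - w j‖ ^ 2
        = (∑ j, b j * ‖w j - x‖ ^ 2) + ∑ i, a i * ‖v i - x‖ ^ 2 := by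
      have : ∀ i, ∑ j, (a i * b j) * ‖v i - w j‖ ^ 2
          = a i * ((∑ j, b j * ‖w j - x‖ ^ 2) + ‖x - v i‖ ^ 2) := by
        intro i
        rw [← step i, Finset.mul_sum]
        refine Finset.sum_congr rfl fun j _ => ?_
        rw [norm_sub_rev (w j) (v i)]
        ring
      simp_rw [this, mul_add]
      rw [Finset.sum_add_distrib, ← Finset.sum_mul, ha1, one_mul]
      congr 1
      exact Finset.sum_congr rfl fun i _ => by rw [norm_sub_rev]
    rw [expand]
    have : ∑ i, a i * ‖v i - x‖ ^ 2 ≤ Rv ^ 2 := hvbound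
    linarith
  -- extract a pair with positive weight
  by_contra hcon
  push_neg at hcon
  have hlt : ∀ i j, Rv ^ 2 + Rw ^ 2 < ‖v i - w j‖ ^ 2 := by
    intro i j
    have h := hcon i j
    have hd : Real.sqrt (Rv ^ 2 + Rw ^ 2) < dist (v i) (w j) := h
    have h0 : (0:ℝ) ≤ Rv ^ 2 + Rw ^ 2 := by positivity
    have := Real.sq_sqrt h0
    have hds : dist (v i) (w j) = ‖v i - w j‖ := dist_eq_norm _ _
    nlinarith [Real.sqrt_nonneg (Rv ^ 2 + Rw ^ 2), dist_nonneg (x := v i) (y := w j)]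
  -- total weight is 1, so there is a pair with positive weight
  have hsum1 : ∑ i, ∑ j, a i * b j = 1 := by
    simp_rw [← Finset.mul_sum, hb1, mul_one, ha1]
  have hexists : ∃ i j, 0 < a i * b j := by
    by_contra hno
    push_neg at hno
    have : ∀ i, ∀ j, a i * b j = 0 := fun i j =>
      le_antisymm (hno i j) (mul_nonneg (ha0 i) (hb0 j))
    simp only [this, Finset.sum_const_zero] at hsum1
    exact one_ne_zero hsum1.symm
  obtain ⟨i₀, j₀, hpos⟩ := hexists
  have hstrict : ∑ i, ∑ j, (a i * b j) * (Rv ^ 2 + Rw ^ 2)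
      < ∑ i, ∑ j, (a i * b j) * ‖v i - w j‖ ^ 2 := by
    rw [← Fintype.sum_prod_type', ← Fintype.sum_prod_type']
    refine Finset.sum_lt_sum (fun p _ => ?_) ⟨(i₀, j₀), Finset.mem_univ _, ?_⟩
    · exact mul_le_mul_of_nonneg_left (hlt p.1 p.2).le
        (mul_nonneg (ha0 p.1) (hb0 p.2))
    · exact mul_lt_mul_of_pos_left (hlt i₀ j₀) hpos
  have : ∑ i, ∑ j, (a i * b j) * (Rv ^ 2 + Rw ^ 2) = Rv ^ 2 + Rw ^ 2 := by
    simp_rw [← Finset.sum_mul]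
    rw [hsum1, one_mul]
  linarith
end

section
/- Let $\Delta_k$ and $\Delta_m$ be $k$- and $m$-dimensional simplices in $\mathbb{R}^n$, each with all edges of length at most $L$. If $\Delta_k \cap \Delta_m \neq \emptyset$, then there exist a vertex $v$ of $\Delta_k$ and a vertex $w$ of $\Delta_m$ with $d(v,w) \leq L\sqrt{1 - \tfrac{1}{2}\left(\tfrac{1}{k+1} + \tfrac{1}{m+1}\right)}$. -/
open Finset RealInnerProductSpace

section Aux

variable {E : Type*} [NormedAddCommGroup E] [InnerProductSpace ℝ E]

private lemma aux_weights' {ι : Type*} [Fintype ι] [DecidableEq ι] {v : ι → E} {x : E}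
    (hx : x ∈ convexHull ℝ (Set.range v)) :
    ∃ a : ι → ℝ, (∀ i, 0 ≤ a i) ∧ ∑ i, a i = 1 ∧ ∑ i, a i • v i = x := by
  rw [convexHull_range_eq_exists_affineCombination] at hx
  obtain ⟨s, wt, h0, h1, hx⟩ := hx
  refine ⟨fun i => if i ∈ s then wt i else 0, fun i => ?_, ?_, ?_⟩
  · dsimp only; split
    · exact h0 _ ‹_›
    · exact le_rfl
  · simp only; rw [Finset.sum_ite_mem, Finset.univ_inter, h1]
  · simp only; rw [← hx, s.affineCombination_eq_linear_combination v wt h1]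
    simp only [ite_smul, zero_smul]
    rw [Finset.sum_ite_mem, Finset.univ_inter]

private lemma aux_key' {ι κ : Type*} [Fintype ι] [Fintype κ] (a : ι → ℝ) (b : κ → ℝ)
    (v : ι → E) (w : κ → E) (ha1 : ∑ i, a i = 1) (hb1 : ∑ j, b j = 1) :
    ∑ i, ∑ j, a i * b j * ‖v i - w j‖ ^ 2
      = ∑ i, a i * ‖v i‖ ^ 2 + ∑ j, b j * ‖w j‖ ^ 2
        - 2 * ⟪∑ i, a i • v i, ∑ j, b j • w j⟫ := by
  have expand : ∀ x y : E, ‖x - y‖ ^ 2 = ‖x‖ ^ 2 - 2 * ⟪x, y⟫ + ‖y‖ ^ 2 := fun x y =>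
    norm_sub_sq_real x y
  simp only [expand, sum_inner, inner_sum, real_inner_smul_left, real_inner_smul_right,
    Finset.mul_sum, mul_sub, mul_add, Finset.sum_add_distrib, Finset.sum_sub_distrib]
  have h1 : ∑ i : ι, ∑ j : κ, a i * b j * ‖v i‖ ^ 2 = ∑ i, a i * ‖v i‖ ^ 2 := by
    refine Finset.sum_congr rfl fun i _ => ?_
    calc ∑ j : κ, a i * b j * ‖v i‖ ^ 2 = (∑ j : κ, b j) * (a i * ‖v i‖ ^ 2) := by
          rw [Finset.sum_mul]; exact Finset.sum_congr rfl fun j _ => by ring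
      _ = a i * ‖v i‖ ^ 2 := by rw [hb1, one_mul]
  have h2 : ∑ i : ι, ∑ j : κ, a i * b j * ‖w j‖ ^ 2 = ∑ j, b j * ‖w j‖ ^ 2 := by
    rw [Finset.sum_comm]
    refine Finset.sum_congr rfl fun j _ => ?_
    calc ∑ i : ι, a i * b j * ‖w j‖ ^ 2 = (∑ i : ι, a i) * (b j * ‖w j‖ ^ 2) := by
          rw [Finset.sum_mul]; exact Finset.sum_congr rfl fun i _ => by ring
      _ = b j * ‖w j‖ ^ 2 := by rw [ha1, one_mul]
  have h3 : ∑ i : ι, ∑ j : κ, a i * b j * (2 * ⟪v i, w j⟫)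
      = ∑ j : κ, ∑ i : ι, 2 * (b j * (a i * ⟪v i, w j⟫)) := by
    rw [Finset.sum_comm]
    exact Finset.sum_congr rfl fun j _ => Finset.sum_congr rfl fun i _ => by ring
  rw [h1, h2, h3]; ring

private lemma aux_bound' {ι : Type*} [Fintype ι] [DecidableEq ι] [Nonempty ι] (a : ι → ℝ)
    (v : ι → E) (L : ℝ) (ha0 : ∀ i, 0 ≤ a i) (ha1 : ∑ i, a i = 1)
    (hL : ∀ i j, i ≠ j → ‖v i - v j‖ ≤ L) :
    2 * (∑ i, a i * ‖v i‖ ^ 2 - ⟪∑ i, a i • v i, ∑ i, a i • v i⟫)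
      ≤ L ^ 2 * (1 - 1 / (Fintype.card ι : ℝ)) := by
  have hkey := aux_key' a a v v ha1 ha1
  have hstep : ∑ i, ∑ j, a i * a j * ‖v i - v j‖ ^ 2
      ≤ ∑ i : ι, ∑ j : ι, (if i = j then 0 else a i * a j * L ^ 2) := by
    refine Finset.sum_le_sum fun i _ => Finset.sum_le_sum fun j _ => ?_
    split
    · rename_i h; subst h; simp
    · rename_i h
      have := pow_le_pow_left₀ (norm_nonneg _) (hL i j h) 2
      exact mul_le_mul_of_nonneg_left this (mul_nonneg (ha0 i) (ha0 j))
  have hcomp : ∑ i : ι, ∑ j : ι, (if i = j then 0 else a i * a j * L ^ 2)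
      = L ^ 2 * (1 - ∑ i, (a i) ^ 2) := by
    have : ∀ i, ∑ j : ι, (if i = j then 0 else a i * a j * L ^ 2)
        = a i * L ^ 2 - (a i) ^ 2 * L ^ 2 := by
      intro i
      have e1 : ∀ j, (if i = j then 0 else a i * a j * L ^ 2)
          = a i * a j * L ^ 2 - (if i = j then a i * a j * L ^ 2 else 0) := by
        intro j; split <;> ring
      simp_rw [e1, Finset.sum_sub_distrib, Finset.sum_ite_eq, Finset.mem_univ, if_true]
      rw [show ∑ j, a i * a j * L ^ 2 = (∑ j, a j) * (a i * L ^ 2) by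
        rw [Finset.sum_mul]; exact Finset.sum_congr rfl fun j _ => by ring, ha1]
      ring
    simp_rw [this, Finset.sum_sub_distrib]
    rw [show ∑ i, a i * L ^ 2 = (∑ i, a i) * L ^ 2 from Finset.sum_mul .. |>.symm, ha1]
    rw [show ∑ i, (a i) ^ 2 * L ^ 2 = (∑ i, (a i) ^ 2) * L ^ 2 from Finset.sum_mul .. |>.symm]
    ring
  have hcs : 1 / (Fintype.card ι : ℝ) ≤ ∑ i, (a i) ^ 2 := by
    have h := sq_sum_le_card_mul_sum_sq (s := (Finset.univ : Finset ι)) (f := a)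
    rw [ha1, one_pow] at h
    have hcard : (0 : ℝ) < (Fintype.card ι : ℝ) := by
      exact_mod_cast Fintype.card_pos
    rw [div_le_iff₀ hcard]
    calc (1 : ℝ) ≤ ↑(Finset.univ.card) * ∑ i, (a i) ^ 2 := h
      _ = (∑ i, (a i) ^ 2) * ↑(Fintype.card ι) := by
          rw [Finset.card_univ]; ring
  calc 2 * (∑ i, a i * ‖v i‖ ^ 2 - ⟪∑ i, a i • v i, ∑ i, a i • v i⟫)
      = ∑ i, ∑ j, a i * a j * ‖v i - v j‖ ^ 2 := by rw [hkey]; ring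
    _ ≤ L ^ 2 * (1 - ∑ i, (a i) ^ 2) := hstep.trans_eq hcomp
    _ ≤ L ^ 2 * (1 - 1 / (Fintype.card ι : ℝ)) := by
        apply mul_le_mul_of_nonneg_left _ (sq_nonneg L)
        linarith

end Aux

theorem stmt1 (n k m : ℕ) (L : ℝ)
    (v : Fin (k + 1) → EuclideanSpace ℝ (Fin n))
    (w : Fin (m + 1) → EuclideanSpace ℝ (Fin n))
    (hv : AffineIndependent ℝ v) (hw : AffineIndependent ℝ w)
    (hvL : ∀ i j, i ≠ j → dist (v i) (v j) ≤ L)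
    (hwL : ∀ i j, i ≠ j → dist (w i) (w j) ≤ L)
    (hint : (convexHull ℝ (Set.range v) ∩ convexHull ℝ (Set.range w)).Nonempty) :
    ∃ i j, dist (v i) (w j) ≤
      L * Real.sqrt (1 - (1 / ((k : ℝ) + 1) + 1 / ((m : ℝ) + 1)) / 2) := by
  obtain ⟨x, hx1, hx2⟩ := hint
  obtain ⟨a, ha0, ha1, hax⟩ := aux_weights' hx1
  obtain ⟨b, hb0, hb1, hbx⟩ := aux_weights' hx2
  set t : ℝ := 1 - (1 / ((k : ℝ) + 1) + 1 / ((m : ℝ) + 1)) / 2 with ht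
  -- the minimizing pair
  obtain ⟨p, -, hp⟩ := Finset.exists_min_image (Finset.univ : Finset (Fin (k + 1) × Fin (m + 1)))
    (fun p => dist (v p.1) (w p.2)) Finset.univ_nonempty
  refine ⟨p.1, p.2, ?_⟩
  set d : ℝ := dist (v p.1) (w p.2) with hd
  have hdnn : 0 ≤ d := dist_nonneg
  -- d^2 is at most the weighted average
  have hsum1 : ∑ i, ∑ j, a i * b j = 1 := by
    simp_rw [← Finset.mul_sum, hb1, mul_one]; exact ha1
  have hle1 : d ^ 2 ≤ ∑ i, ∑ j, a i * b j * ‖v i - w j‖ ^ 2 := by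
    calc d ^ 2 = (∑ i, ∑ j, a i * b j) * d ^ 2 := by rw [hsum1, one_mul]
      _ = ∑ i, ∑ j, a i * b j * d ^ 2 := by
          rw [Finset.sum_mul]
          exact Finset.sum_congr rfl fun i _ => by rw [Finset.sum_mul]
      _ ≤ ∑ i, ∑ j, a i * b j * ‖v i - w j‖ ^ 2 := by
          refine Finset.sum_le_sum fun i _ => Finset.sum_le_sum fun j _ => ?_
          have hdle : d ≤ ‖v i - w j‖ := by
            rw [← dist_eq_norm]; exact hp (i, j) (Finset.mem_univ _)
          exact mul_le_mul_of_nonneg_left (pow_le_pow_left₀ hdnn hdle 2)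
            (mul_nonneg (ha0 i) (hb0 j))
  -- the two variance bounds
  have hbv := aux_bound' a v L ha0 ha1 (fun i j h => by rw [← dist_eq_norm]; exact hvL i j h)
  have hbw := aux_bound' b w L hb0 hb1 (fun i j h => by rw [← dist_eq_norm]; exact hwL i j h)
  rw [hax] at hbv
  rw [hbx] at hbw
  have hkey := aux_key' a b v w ha1 hb1
  rw [hax, hbx] at hkey
  have hcardv : (Fintype.card (Fin (k + 1)) : ℝ) = (k : ℝ) + 1 := by
    rw [Fintype.card_fin]; push_cast; ring
  have hcardw : (Fintype.card (Fin (m + 1)) : ℝ) = (m : ℝ) + 1 := by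
    rw [Fintype.card_fin]; push_cast; ring
  rw [hcardv] at hbv
  rw [hcardw] at hbw
  have hd2 : d ^ 2 ≤ L ^ 2 * t := by
    have := hle1.trans_eq hkey
    rw [ht]; nlinarith [hbv, hbw]
  rcases le_or_gt 0 L with hL | hL
  · have hdle : d ≤ Real.sqrt (L ^ 2 * t) := by
      rw [← Real.sqrt_sq hdnn]
      exact Real.sqrt_le_sqrt hd2
    rwa [Real.sqrt_mul (sq_nonneg L), Real.sqrt_sq hL] at hdle
  · -- L < 0 forces k = m = 0, whence t = 0 and d = 0
    have hk : k = 0 := by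
      by_contra h
      have h01 : (⟨0, by omega⟩ : Fin (k + 1)) ≠ ⟨1, by omega⟩ := by
        simp [Fin.ext_iff]
      have := hvL _ _ h01
      have := dist_nonneg (x := v ⟨0, by omega⟩) (y := v ⟨1, by omega⟩)
      linarith
    have hm : m = 0 := by
      by_contra h
      have h01 : (⟨0, by omega⟩ : Fin (m + 1)) ≠ ⟨1, by omega⟩ := by
        simp [Fin.ext_iff]
      have := hwL _ _ h01
      have := dist_nonneg (x := w ⟨0, by omega⟩) (y := w ⟨1, by omega⟩)
      linarith
    have ht0 : t = 0 := by rw [ht, hk, hm]; norm_num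
    have hd0 : d = 0 := by nlinarith [hd2, ht0]
    rw [hd0, ht0, Real.sqrt_zero, mul_zero]
end

section
/- Let $\Delta_k$ and $\Delta_m$ be $k$- and $m$-dimensional simplices in $\mathbb{R}^n$ that intersect nontrivially. If $k + m > n$, then some proper face of $\Delta_k$ intersects $\Delta_m$, or some proper face of $\Delta_m$ intersects $\Delta_k$. -/
open Finset

lemma aux_exists_weights {V : Type*} [AddCommGroup V] [Module ℝ V] {N : ℕ} (v : Fin N → V) {x : V}
    (hx : x ∈ convexHull ℝ (Set.range v)) :
    ∃ a : Fin N → ℝ, (∀ i, 0 ≤ a i) ∧ ∑ i, a i = 1 ∧ ∑ i, a i • v i = x := by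
  classical
  rw [convexHull_range_eq_exists_affineCombination] at hx
  obtain ⟨s, wt, h0, h1, hx⟩ := hx
  refine ⟨fun i => if i ∈ s then wt i else 0, fun i => ?_, ?_, ?_⟩
  · dsimp only; split
    · exact h0 _ ‹_›
    · exact le_refl 0
  · simp [Finset.sum_ite_mem, h1]
  · rw [Finset.affineCombination_eq_linear_combination s v wt h1] at hx
    rw [← hx]
    simp [ite_smul, Finset.sum_ite_mem]

lemma aux_mem_range {V : Type*} [AddCommGroup V] [Module ℝ V] {N : ℕ} (v : Fin N → V)
    (c : Fin N → ℝ) (h0 : ∀ i, 0 ≤ c i) (h1 : ∑ i, c i = 1) :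
    ∑ i, c i • v i ∈ convexHull ℝ (Set.range v) := by
  have := affineCombination_mem_convexHull (s := Finset.univ) (v := v) (w := c)
    (fun i _ => h0 i) h1
  rwa [Finset.affineCombination_eq_linear_combination _ _ _ h1] at this

lemma aux_mem_face {V : Type*} [AddCommGroup V] [Module ℝ V] {N : ℕ} (v : Fin N → V)
    (c : Fin N → ℝ) (h0 : ∀ i, 0 ≤ c i) (h1 : ∑ i, c i = 1) :
    ∑ i, c i • v i ∈
      convexHull ℝ (v '' ↑(Finset.univ.filter (fun i => c i ≠ 0))) := by
  classical
  set s := Finset.univ.filter (fun i => c i ≠ 0) with hs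
  have hsum : ∑ i ∈ s, c i = 1 := by
    rw [← h1]; exact Finset.sum_filter_ne_zero _
  have hvec : ∑ i ∈ s, c i • v i = ∑ i, c i • v i := by
    refine Finset.sum_subset (Finset.subset_univ s) fun i _ hi => ?_
    have : c i = 0 := by
      by_contra h; exact hi (by simp [hs, h])
    simp [this]
  have := Finset.centerMass_mem_convexHull (t := s) (w := c) (z := v)
    (s := v '' ↑s) (fun i _ => h0 i) (by rw [hsum]; norm_num)
    (fun i hi => Set.mem_image_of_mem v hi)
  rwa [Finset.centerMass, hsum, hvec, inv_one, one_smul] at this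

set_option maxHeartbeats 1000000 in
theorem stmt3 (n k m : ℕ)
    (v : Fin (k + 1) → EuclideanSpace ℝ (Fin n))
    (w : Fin (m + 1) → EuclideanSpace ℝ (Fin n))
    (hv : AffineIndependent ℝ v) (hw : AffineIndependent ℝ w)
    (hint : (convexHull ℝ (Set.range v) ∩ convexHull ℝ (Set.range w)).Nonempty)
    (hkm : n < k + m) :
    (∃ s : Finset (Fin (k + 1)), s.Nonempty ∧ s ≠ Finset.univ ∧
      (convexHull ℝ (v '' (s : Set (Fin (k + 1)))) ∩ convexHull ℝ (Set.range w)).Nonempty) ∨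
    (∃ s : Finset (Fin (m + 1)), s.Nonempty ∧ s ≠ Finset.univ ∧
      (convexHull ℝ (w '' (s : Set (Fin (m + 1)))) ∩ convexHull ℝ (Set.range v)).Nonempty) := by
  classical
  obtain ⟨x, hxv, hxw⟩ := hint
  obtain ⟨a, ha0, ha1, hax⟩ := aux_exists_weights v hxv
  obtain ⟨b, hb0, hb1, hbx⟩ := aux_exists_weights w hxw
  set P : Set ((Fin (k+1) → ℝ) × (Fin (m+1) → ℝ)) :=
      {p | (∀ i, 0 ≤ p.1 i) ∧ (∀ j, 0 ≤ p.2 j) ∧ (∑ i, p.1 i = 1) ∧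
      (∑ j, p.2 j = 1) ∧ (∑ i, p.1 i • v i = ∑ j, p.2 j • w j)} with hP
  have hPne : P.Nonempty := ⟨(a, b), ha0, hb0, ha1, hb1, by
    show ∑ i, a i • v i = ∑ j, b j • w j
    rw [hax, hbx]⟩
  have hPclosed : IsClosed P := by
    have h1 : IsClosed {p : (Fin (k+1) → ℝ) × (Fin (m+1) → ℝ) | ∀ i, 0 ≤ p.1 i} := by
      rw [Set.setOf_forall]
      exact isClosed_iInter fun i => isClosed_le continuous_const (by fun_prop)
    have h2 : IsClosed {p : (Fin (k+1) → ℝ) × (Fin (m+1) → ℝ) | ∀ j, 0 ≤ p.2 j} := by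
      rw [Set.setOf_forall]
      exact isClosed_iInter fun j => isClosed_le continuous_const (by fun_prop)
    have h3 : IsClosed {p : (Fin (k+1) → ℝ) × (Fin (m+1) → ℝ) | ∑ i, p.1 i = 1} :=
      isClosed_eq (by fun_prop) continuous_const
    have h4 : IsClosed {p : (Fin (k+1) → ℝ) × (Fin (m+1) → ℝ) | ∑ j, p.2 j = 1} :=
      isClosed_eq (by fun_prop) continuous_const
    have h5 : IsClosed {p : (Fin (k+1) → ℝ) × (Fin (m+1) → ℝ) |
        ∑ i, p.1 i • v i = ∑ j, p.2 j • w j} := isClosed_eq (by fun_prop) (by fun_prop)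
    exact h1.inter (h2.inter (h3.inter (h4.inter h5)))
  have hPsub : P ⊆ Set.Icc 0 (fun _ => 1, fun _ => 1) := by
    rintro p ⟨h1, h2, h3, h4, -⟩
    refine ⟨⟨h1, h2⟩, ⟨fun i => ?_, fun j => ?_⟩⟩
    · calc p.1 i ≤ ∑ i', p.1 i' := Finset.single_le_sum (fun i' _ => h1 i') (mem_univ i)
      _ = 1 := h3
    · calc p.2 j ≤ ∑ j', p.2 j' := Finset.single_le_sum (fun j' _ => h2 j') (mem_univ j)
      _ = 1 := h4
  have hPcomp : IsCompact P := IsCompact.of_isClosed_subset isCompact_Icc hPclosed hPsub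
  -- extreme point
  obtain ⟨p, hpx⟩ := hPcomp.extremePoints_nonempty hPne
  rw [mem_extremePoints] at hpx
  obtain ⟨hpP, hpext⟩ := hpx
  obtain ⟨hp1, hp2, hp3, hp4, hp5⟩ := hpP
  -- a nonzero element of the kernel
  have hker : ∃ q : (Fin (k+1) → ℝ) × (Fin (m+1) → ℝ), q ≠ 0 ∧ (∑ i, q.1 i = 0) ∧
      (∑ j, q.2 j = 0) ∧ (∑ i, q.1 i • v i = ∑ j, q.2 j • w j) := by
    set A : (Fin (k+1) → ℝ) →ₗ[ℝ] EuclideanSpace ℝ (Fin n) := Fintype.linearCombination ℝ v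
    set B : (Fin (m+1) → ℝ) →ₗ[ℝ] EuclideanSpace ℝ (Fin n) := Fintype.linearCombination ℝ w
    set S1 : (Fin (k+1) → ℝ) →ₗ[ℝ] ℝ := Fintype.linearCombination ℝ (fun _ => (1:ℝ))
    set S2 : (Fin (m+1) → ℝ) →ₗ[ℝ] ℝ := Fintype.linearCombination ℝ (fun _ => (1:ℝ))
    set F := LinearMap.fst ℝ (Fin (k+1) → ℝ) (Fin (m+1) → ℝ)
    set G := LinearMap.snd ℝ (Fin (k+1) → ℝ) (Fin (m+1) → ℝ)
    set L : ((Fin (k+1) → ℝ) × (Fin (m+1) → ℝ)) →ₗ[ℝ] ℝ × ℝ × EuclideanSpace ℝ (Fin n) :=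
      (S1.comp F).prod ((S2.comp G).prod (A.comp F - B.comp G))
    have hni : ¬ Function.Injective L := by
      intro hinj
      have := LinearMap.finrank_le_finrank_of_injective hinj
      simp [Module.finrank_prod, Module.finrank_pi, finrank_euclideanSpace_fin] at this
      omega
    rw [← LinearMap.ker_eq_bot, Submodule.eq_bot_iff] at hni
    push_neg at hni
    obtain ⟨q, hqker, hq0⟩ := hni
    refine ⟨q, hq0, ?_, ?_, ?_⟩ <;>
    · have h := hqker
      simp only [L, LinearMap.mem_ker, LinearMap.prod_apply, LinearMap.comp_apply,
        LinearMap.sub_apply, Function.prod_apply, Prod.mk_eq_zero, Prod.ext_iff] at h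
      simp only [A, B, S1, S2, F, G, Fintype.linearCombination_apply, smul_eq_mul, mul_one,
        LinearMap.fst_apply, LinearMap.snd_apply] at h
      obtain ⟨h1, h2, h3⟩ := h
      first
      | exact h1
      | exact h2
      | (rw [← sub_eq_zero]; exact h3)
  obtain ⟨q, hq0, hq1, hq2, hq3⟩ := hker
  -- some coordinate of p vanishes
  have hzero : (∃ i, p.1 i = 0) ∨ (∃ j, p.2 j = 0) := by
    by_contra hcon
    push_neg at hcon
    obtain ⟨hz1, hz2⟩ := hcon
    have hpos1 : ∀ i, 0 < p.1 i := fun i => lt_of_le_of_ne (hp1 i) (Ne.symm (hz1 i))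
    have hpos2 : ∀ j, 0 < p.2 j := fun j => lt_of_le_of_ne (hp2 j) (Ne.symm (hz2 j))
    set ρ : ℝ := min (Finset.univ.inf' univ_nonempty p.1) (Finset.univ.inf' univ_nonempty p.2)
      with hρ
    have hρpos : 0 < ρ := by
      apply lt_min
      · exact (Finset.lt_inf'_iff univ_nonempty).2 fun i _ => hpos1 i
      · exact (Finset.lt_inf'_iff univ_nonempty).2 fun j _ => hpos2 j
    have hqn : 0 < ‖q‖ := norm_pos_iff.2 hq0
    set ε : ℝ := ρ / ‖q‖ with hε
    have hεpos : 0 < ε := div_pos hρpos hqn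
    have hbound1 : ∀ i, |ε * q.1 i| ≤ p.1 i := by
      intro i
      have h1 : |q.1 i| ≤ ‖q‖ := by
        calc |q.1 i| = ‖q.1 i‖ := (Real.norm_eq_abs _).symm
        _ ≤ ‖q.1‖ := norm_le_pi_norm q.1 i
        _ ≤ ‖q‖ := norm_fst_le q
      calc |ε * q.1 i| = ε * |q.1 i| := by rw [abs_mul, abs_of_pos hεpos]
      _ ≤ ε * ‖q‖ := mul_le_mul_of_nonneg_left h1 hεpos.le
      _ = ρ := by rw [hε]; field_simp
      _ ≤ Finset.univ.inf' univ_nonempty p.1 := min_le_left _ _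
      _ ≤ p.1 i := Finset.inf'_le _ (mem_univ i)
    have hbound2 : ∀ j, |ε * q.2 j| ≤ p.2 j := by
      intro j
      have h1 : |q.2 j| ≤ ‖q‖ := by
        calc |q.2 j| = ‖q.2 j‖ := (Real.norm_eq_abs _).symm
        _ ≤ ‖q.2‖ := norm_le_pi_norm q.2 j
        _ ≤ ‖q‖ := norm_snd_le q
      calc |ε * q.2 j| = ε * |q.2 j| := by rw [abs_mul, abs_of_pos hεpos]
      _ ≤ ε * ‖q‖ := mul_le_mul_of_nonneg_left h1 hεpos.le
      _ = ρ := by rw [hε]; field_simp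
      _ ≤ Finset.univ.inf' univ_nonempty p.2 := min_le_right _ _
      _ ≤ p.2 j := Finset.inf'_le _ (mem_univ j)
    have hmem : ∀ t : ℝ, |t| ≤ ε → p + t • q ∈ P := by
      intro t ht
      have htb1 : ∀ i, |t * q.1 i| ≤ p.1 i := by
        intro i
        refine le_trans ?_ (hbound1 i)
        rw [abs_mul, abs_mul, abs_of_pos hεpos]
        exact mul_le_mul_of_nonneg_right ht (abs_nonneg _)
      have htb2 : ∀ j, |t * q.2 j| ≤ p.2 j := by
        intro j
        refine le_trans ?_ (hbound2 j)
        rw [abs_mul, abs_mul, abs_of_pos hεpos]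
        exact mul_le_mul_of_nonneg_right ht (abs_nonneg _)
      refine ⟨fun i => ?_, fun j => ?_, ?_, ?_, ?_⟩
      · have := htb1 i
        have := abs_le.1 this
        show 0 ≤ p.1 i + t * q.1 i
        linarith [this.1]
      · have := htb2 j
        have := abs_le.1 this
        show 0 ≤ p.2 j + t * q.2 j
        linarith [this.1]
      · show ∑ i, (p.1 i + t * q.1 i) = 1
        rw [Finset.sum_add_distrib, ← Finset.mul_sum, hq1, hp3]; ring
      · show ∑ j, (p.2 j + t * q.2 j) = 1
        rw [Finset.sum_add_distrib, ← Finset.mul_sum, hq2, hp4]; ring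
      · show ∑ i, (p.1 i + t * q.1 i) • v i = ∑ j, (p.2 j + t * q.2 j) • w j
        simp only [add_smul, mul_smul, Finset.sum_add_distrib, ← Finset.smul_sum]
        rw [hp5, hq3]
    have hmem1 : p + ε • q ∈ P := hmem ε (by rw [abs_of_pos hεpos])
    have hmem2 : p + (-ε) • q ∈ P := hmem (-ε) (by rw [abs_neg, abs_of_pos hεpos])
    have hseg : p ∈ openSegment ℝ (p + ε • q) (p + (-ε) • q) := by
      refine ⟨1/2, 1/2, by norm_num, by norm_num, by norm_num, ?_⟩
      module
    obtain ⟨he1, -⟩ := hpext _ hmem1 _ hmem2 hseg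
    have : ε • q = 0 := by
      have := congrArg (fun z => z - p) he1
      simpa [add_sub_cancel_left] using this
    rcases smul_eq_zero.1 this with h | h
    · exact absurd h (ne_of_gt hεpos)
    · exact hq0 h
  rcases hzero with ⟨i₀, hi₀⟩ | ⟨j₀, hj₀⟩
  · left
    set s := Finset.univ.filter (fun i => p.1 i ≠ 0) with hs
    refine ⟨s, ?_, ?_, ⟨∑ i, p.1 i • v i, aux_mem_face v p.1 hp1 hp3, ?_⟩⟩
    · by_contra hemp
      rw [Finset.not_nonempty_iff_eq_empty] at hemp
      have : ∀ i, p.1 i = 0 := by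
        intro i
        by_contra h
        have : i ∈ s := by simp [hs, h]
        simp [hemp] at this
      rw [Finset.sum_congr rfl (fun i _ => this i)] at hp3
      simp at hp3
    · intro huniv
      have : i₀ ∈ s := huniv ▸ mem_univ i₀
      simp [hs, hi₀] at this
    · rw [hp5]
      exact aux_mem_range w p.2 hp2 hp4
  · right
    set s := Finset.univ.filter (fun j => p.2 j ≠ 0) with hs
    refine ⟨s, ?_, ?_, ⟨∑ j, p.2 j • w j, aux_mem_face w p.2 hp2 hp4, ?_⟩⟩
    · by_contra hemp
      rw [Finset.not_nonempty_iff_eq_empty] at hemp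
      have : ∀ j, p.2 j = 0 := by
        intro j
        by_contra h
        have : j ∈ s := by simp [hs, h]
        simp [hemp] at this
      rw [Finset.sum_congr rfl (fun j _ => this j)] at hp4
      simp at hp4
    · intro huniv
      have : j₀ ∈ s := huniv ▸ mem_univ j₀
      simp [hs, hj₀] at this
    · rw [← hp5]
      exact aux_mem_range v p.1 hp1 hp3
end

section
/- Every point of a simplex $\Delta$ in $\mathbb{R}^n$ with circumradius $R$ is within distance $R$ of at least one vertex of $\Delta$. -/
theorem stmt5 (n k : ℕ)
    (v : Fin (k + 1) → EuclideanSpace ℝ (Fin n))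
    (hv : AffineIndependent ℝ v) (R : ℝ)
    (hR : IsLeast {r : ℝ | ∃ c, convexHull ℝ (Set.range v) ⊆ Metric.closedBall c r} R) :
    ∀ x ∈ convexHull ℝ (Set.range v), ∃ i, dist x (v i) ≤ R := by
  intro x hx
  obtain ⟨c, hc⟩ := hR.1
  have hvball : ∀ i, dist (v i) c ≤ R := fun i =>
    hc (subset_convexHull ℝ _ (Set.mem_range_self i))
  have hR0 : 0 ≤ R := le_trans dist_nonneg (hvball 0)
  rw [convexHull_range_eq_exists_affineCombination] at hx
  obtain ⟨s, w, hw0, hw1, hxw⟩ := hx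
  have hxsum : x = ∑ i ∈ s, w i • v i := by
    rw [← hxw, affineCombination_eq_centerMass hw1, Finset.centerMass_eq_of_sum_1 _ _ hw1]
  -- key identity: ∑ w i • (x - v i) = 0
  have hzero : ∑ i ∈ s, w i • (x - v i) = 0 := by
    simp_rw [smul_sub]
    rw [Finset.sum_sub_distrib, ← Finset.sum_smul, hw1, one_smul, ← hxsum, sub_self]
  -- expand ‖c - v i‖²
  have hexp : ∀ i, ‖c - v i‖ ^ 2 =
      ‖c - x‖ ^ 2 + 2 * inner ℝ (c - x) (x - v i) + ‖x - v i‖ ^ 2 := by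
    intro i
    have : c - v i = (c - x) + (x - v i) := by abel
    rw [this, norm_add_sq_real]
  have key : ∑ i ∈ s, w i * ‖x - v i‖ ^ 2 ≤ R ^ 2 := by
    have h1 : ∑ i ∈ s, w i * ‖c - v i‖ ^ 2
        = ‖c - x‖ ^ 2 + ∑ i ∈ s, w i * ‖x - v i‖ ^ 2 := by
      have h2 : ∑ i ∈ s, w i * inner ℝ (c - x) (x - v i) = (0 : ℝ) := by
        calc ∑ i ∈ s, w i * inner ℝ (c - x) (x - v i)
            = inner ℝ (c - x) (∑ i ∈ s, w i • (x - v i)) := by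
              rw [inner_sum]
              exact Finset.sum_congr rfl fun i _ => by rw [real_inner_smul_right]
          _ = 0 := by rw [hzero, inner_zero_right]
      simp_rw [hexp, mul_add]
      rw [Finset.sum_add_distrib, Finset.sum_add_distrib, ← Finset.sum_mul, hw1, one_mul]
      rw [show ∑ i ∈ s, w i * (2 * inner ℝ (c - x) (x - v i)) =
        2 * ∑ i ∈ s, w i * inner ℝ (c - x) (x - v i) by
          rw [Finset.mul_sum]; exact Finset.sum_congr rfl fun i _ => by ring]
      rw [h2]; ring
    have h3 : ∑ i ∈ s, w i * ‖c - v i‖ ^ 2 ≤ R ^ 2 := by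
      calc ∑ i ∈ s, w i * ‖c - v i‖ ^ 2 ≤ ∑ i ∈ s, w i * R ^ 2 := by
            apply Finset.sum_le_sum
            intro i hi
            apply mul_le_mul_of_nonneg_left _ (hw0 i hi)
            have hle : ‖c - v i‖ ≤ R := by
              rw [← dist_eq_norm, dist_comm]; exact hvball i
            exact pow_le_pow_left₀ (norm_nonneg _) hle 2
        _ = R ^ 2 := by rw [← Finset.sum_mul, hw1, one_mul]
    nlinarith [sq_nonneg ‖c - x‖]
  by_contra h
  push_neg at h
  have hlt : ∀ i, R < ‖x - v i‖ := fun i => by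
    rw [← dist_eq_norm]; exact h i
  have hsne : ∃ i ∈ s, 0 < w i := by
    by_contra hc2
    push_neg at hc2
    have : ∑ i ∈ s, w i = 0 := Finset.sum_eq_zero fun i hi =>
      le_antisymm (hc2 i hi) (hw0 i hi)
    rw [hw1] at this; norm_num at this
  obtain ⟨j, hjs, hjw⟩ := hsne
  have : R ^ 2 < ∑ i ∈ s, w i * ‖x - v i‖ ^ 2 := by
    calc R ^ 2 = ∑ i ∈ s, w i * R ^ 2 := by rw [← Finset.sum_mul, hw1, one_mul]
      _ < ∑ i ∈ s, w i * ‖x - v i‖ ^ 2 := by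
          apply Finset.sum_lt_sum
          · intro i hi
            apply mul_le_mul_of_nonneg_left _ (hw0 i hi)
            exact pow_le_pow_left₀ hR0 (le_of_lt (hlt i)) 2
          · exact ⟨j, hjs, by
              apply mul_lt_mul_of_pos_left _ hjw
              exact pow_lt_pow_left₀ (hlt j) hR0 (by norm_num)⟩
  linarith
end

section
/- If $X$ is a compact subset of $\mathbb{R}^n$ with diameter $D$, then $X$ is contained in a closed ball of radius $D\sqrt{\tfrac{n}{2(n+1)}}$. -/
open Metric Finset
open scoped RealInnerProductSpace
variable {E : Type*} [NormedAddCommGroup E] [InnerProductSpace ℝ E] [FiniteDimensional ℝ E]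

lemma jung_center_mem_hull (S : Finset E) (hSne : S.Nonempty)
    (c : E) (hcK : c ∈ convexHull ℝ (S : Set E))
    (hmin : IsMinOn (fun x => S.sup' hSne (fun p => dist x p)) (convexHull ℝ (S : Set E)) c) :
    c ∈ convexHull ℝ ((S.filter (fun p => dist c p = S.sup' hSne (fun p => dist c p)) : Finset E)
      : Set E) := by
  set ρ := S.sup' hSne (fun p => dist c p) with hρ
  set T := S.filter (fun p => dist c p = ρ) with hT
  have hTne : T.Nonempty := by
    obtain ⟨p, hp, hpe⟩ := Finset.exists_mem_eq_sup' hSne (fun p => dist c p)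
    exact ⟨p, Finset.mem_filter.2 ⟨hp, hpe.symm⟩⟩
  have hρ0 : 0 ≤ ρ := by
    obtain ⟨p, hp⟩ := hSne
    exact le_trans dist_nonneg (Finset.le_sup' (fun p => dist c p) hp)
  by_contra hc
  have hρpos : 0 < ρ := by
    rcases hρ0.lt_or_eq with h | h
    · exact h
    · exfalso; apply hc
      obtain ⟨p, hp⟩ := hTne
      have hpd : dist c p = ρ := (Finset.mem_filter.1 hp).2
      have : p = c := by
        have := hpd.trans h.symm
        simpa [dist_eq_zero, eq_comm] using this
      exact this ▸ subset_convexHull ℝ _ hp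
  have hKtconv : Convex ℝ (convexHull ℝ (T : Set E)) := convex_convexHull _ _
  have hKtcompact : IsCompact (convexHull ℝ (T : Set E)) :=
    T.finite_toSet.isCompact_convexHull (𝕜 := ℝ)
  obtain ⟨q, hqKt, hqmin⟩ := exists_norm_eq_iInf_of_complete_convex
    ((Set.Nonempty.mono (subset_convexHull ℝ _)) ⟨hTne.choose, hTne.choose_spec⟩)
    hKtcompact.isComplete hKtconv c
  have hproj : ∀ w ∈ convexHull ℝ (T : Set E), ⟪c - q, w - q⟫ ≤ 0 :=
    (norm_eq_iInf_iff_real_inner_le_zero hKtconv hqKt).1 hqmin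
  have hqc : q ≠ c := fun h => hc (h ▸ hqKt)
  set v : E := q - c with hv
  have hvnorm : 0 < ‖v‖ := by simpa [hv, sub_eq_zero] using hqc
  set δ : ℝ := ‖v‖ ^ 2 with hδdef
  have hδ : 0 < δ := by positivity
  -- inner product bound for touching points
  have hinner : ∀ t ∈ T, δ ≤ ⟪v, t - c⟫ := by
    intro t ht
    have h1 : ⟪c - q, t - q⟫ ≤ 0 := hproj t (subset_convexHull ℝ _ ht)
    have : ⟪v, t - c⟫ = ⟪q - c, t - q⟫ + ⟪q - c, q - c⟫ := by
      rw [← inner_add_right]; congr 1; abel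
    have h1' : (0:ℝ) ≤ ⟪q - c, t - q⟫ := by
      rw [show q - c = -(c - q) by abel, inner_neg_left]; linarith
    rw [this, real_inner_self_eq_norm_sq]
    simp only [hδdef, hv]
    linarith
  -- choose a small step size
  set h : E → ℝ := fun p => if dist c p = ρ then 1 else (ρ - dist c p) / (2 * ‖v‖) with hh
  set ε : ℝ := S.inf' hSne h with hε
  have hεpos : 0 < ε := by
    rw [hε, Finset.lt_inf'_iff]
    intro p hp
    by_cases hpT : dist c p = ρ
    · simp [hh, hpT]
    · have hlt : dist c p < ρ :=
        lt_of_le_of_ne (Finset.le_sup' (fun p => dist c p) hp) hpT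
      simp only [hh, if_neg hpT]
      apply div_pos (by linarith) (by positivity)
  have hε1 : ε ≤ 1 := by
    obtain ⟨t, ht⟩ := hTne
    have := Finset.inf'_le h (Finset.mem_filter.1 ht).1
    rw [hε]
    calc S.inf' hSne h ≤ h t := this
    _ = 1 := by simp [hh, (Finset.mem_filter.1 ht).2]
  set c' : E := c + ε • v with hc'
  have hc'K : c' ∈ convexHull ℝ (S : Set E) := by
    have hqK : q ∈ convexHull ℝ (S : Set E) := by
      refine convexHull_mono ?_ hqKt
      exact fun x hx => (Finset.mem_filter.1 hx).1
    have := (convex_convexHull ℝ (S : Set E)) hcK hqK (by linarith : (0:ℝ) ≤ 1 - ε)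
      hεpos.le (by ring)
    convert this using 1
    rw [hc', hv]
    module
  have hlt : S.sup' hSne (fun p => dist c' p) < ρ := by
    rw [Finset.sup'_lt_iff]
    intro p hp
    by_cases hpT : dist c p = ρ
    · -- touching point
      have hip : δ ≤ ⟪v, p - c⟫ := hinner p (Finset.mem_filter.2 ⟨hp, hpT⟩)
      have hsq : dist c' p ^ 2 ≤ ρ ^ 2 - ε * δ := by
        have hde : dist c' p = ‖(p - c) - ε • v‖ := by
          rw [dist_eq_norm, ← norm_neg]; congr 1; rw [hc']; abel
        rw [hde, norm_sub_sq_real, real_inner_smul_right, norm_smul]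
        have hnc : ‖p - c‖ = ρ := by rw [← dist_eq_norm, dist_comm]; exact hpT
        have hpc : ⟪p - c, v⟫ = ⟪v, p - c⟫ := real_inner_comm _ _
        rw [hnc, hpc]
        have h2 : ‖ε‖ = ε := abs_of_pos hεpos
        rw [h2, mul_pow, ← hδdef]
        nlinarith [mul_le_mul_of_nonneg_left hip hεpos.le,
          mul_nonneg (mul_nonneg hεpos.le hδ.le) (sub_nonneg.2 hε1)]
      have : dist c' p ^ 2 < ρ ^ 2 := by nlinarith [hεpos, hδ]
      exact lt_of_pow_lt_pow_left₀ 2 hρ0 this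
    · -- non-touching point
      have hlt' : dist c p < ρ :=
        lt_of_le_of_ne (Finset.le_sup' (fun p => dist c p) hp) hpT
      have hεh : ε ≤ (ρ - dist c p) / (2 * ‖v‖) := by
        have := Finset.inf'_le h hp
        rw [hε]; rw [hh] at this ⊢
        simpa only [if_neg hpT] using this
      have hstep : dist c' c = ε * ‖v‖ := by
        rw [hc', dist_eq_norm]
        simp [norm_smul, abs_of_pos hεpos]
      calc dist c' p ≤ dist c' c + dist c p := dist_triangle _ _ _
        _ = ε * ‖v‖ + dist c p := by rw [hstep]
        _ < ρ := by
            have h3 : ε * ‖v‖ ≤ (ρ - dist c p) / 2 := by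
              rw [le_div_iff₀ (by positivity : (0:ℝ) < 2 * ‖v‖)] at hεh
              nlinarith [hvnorm]
            linarith
  have := hmin hc'K
  simp only [← hρ] at this
  exact absurd (lt_of_le_of_lt this hlt) (lt_irrefl ρ)

lemma jung_finset (n : ℕ) (hdim : Module.finrank ℝ E ≤ n) (D : ℝ) (hD0 : 0 ≤ D)
    (S : Finset E) (hSne : S.Nonempty) (hdist : ∀ p ∈ S, ∀ q ∈ S, dist p q ≤ D) :
    ∃ c, ∀ p ∈ S, dist c p ≤ D * Real.sqrt ((n : ℝ) / (2 * ((n : ℝ) + 1))) := by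
  classical
  -- minimize the max-distance function over the (compact) convex hull of S
  have hKcpt : IsCompact (convexHull ℝ (S : Set E)) := S.finite_toSet.isCompact_convexHull (𝕜 := ℝ)
  have hKne : (convexHull ℝ (S : Set E)).Nonempty :=
    (Set.Nonempty.mono (subset_convexHull ℝ _)) ⟨hSne.choose, hSne.choose_spec⟩
  have hfc : Continuous (fun x => S.sup' hSne (fun p => dist x p)) := by
    rw [continuous_iff_continuousAt]
    intro x
    exact ContinuousAt.finset_sup'_apply hSne
      (fun p _ => ((continuous_id.dist continuous_const)).continuousAt)
  obtain ⟨c, hcK, hmin⟩ := hKcpt.exists_isMinOn hKne hfc.continuousOn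
  set ρ := S.sup' hSne (fun p => dist c p) with hρdef
  have hρ0 : 0 ≤ ρ := le_trans dist_nonneg (Finset.le_sup' _ hSne.choose_spec)
  refine ⟨c, fun p hp => le_trans (Finset.le_sup' (fun p => dist c p) hp) ?_⟩
  -- it suffices to bound ρ
  have hcT := jung_center_mem_hull S hSne c hcK hmin
  obtain ⟨ι, hfin, z, w, hzT, hai, hw0, hw1, hwz⟩ :=
    eq_pos_convex_span_of_mem_convexHull hcT
  have hne : Nonempty ι := by
    by_contra h
    rw [not_nonempty_iff] at h
    rw [Finset.univ_eq_empty, Finset.sum_empty] at hw1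
    exact one_ne_zero hw1.symm
  have hcard : (Fintype.card ι : ℝ) ≤ (n : ℝ) + 1 := by
    have h1 := hai.card_le_finrank_succ
    have h2 : Module.finrank ℝ (vectorSpan ℝ (Set.range z)) ≤ Module.finrank ℝ E :=
      Submodule.finrank_le _
    have : Fintype.card ι ≤ n + 1 := by omega
    exact_mod_cast this
  have hρi : ∀ i, ‖z i - c‖ = ρ := by
    intro i
    have := hzT (Set.mem_range_self i)
    rw [Finset.mem_coe, Finset.mem_filter] at this
    rw [← dist_eq_norm, dist_comm]
    exact this.2
  have hzS : ∀ i, z i ∈ S := by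
    intro i
    have := hzT (Set.mem_range_self i)
    rw [Finset.mem_coe, Finset.mem_filter] at this
    exact this.1
  -- the center of mass identity
  have h0 : ∑ i, w i • (z i - c) = 0 := by
    simp only [smul_sub, Finset.sum_sub_distrib, hwz, ← Finset.sum_smul, hw1, one_smul, sub_self]
  have hA : ∀ j, ∑ i, w i * dist (z i) (z j) ^ 2 = 2 * ρ ^ 2 := by
    intro j
    have hexp : ∀ i, dist (z i) (z j) ^ 2 = 2 * ρ ^ 2 - 2 * ⟪z i - c, z j - c⟫ := by
      intro i
      rw [dist_eq_norm, show z i - z j = (z i - c) - (z j - c) by abel, norm_sub_sq_real,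
        hρi i, hρi j]
      ring
    calc ∑ i, w i * dist (z i) (z j) ^ 2
        = ∑ i, (w i * (2 * ρ ^ 2) - 2 * ⟪w i • (z i - c), z j - c⟫) := by
          refine Finset.sum_congr rfl fun i _ => ?_
          rw [hexp i, real_inner_smul_left]; ring
      _ = (∑ i, w i) * (2 * ρ ^ 2) - 2 * ⟪∑ i, w i • (z i - c), z j - c⟫ := by
          rw [Finset.sum_sub_distrib, ← Finset.sum_mul, ← Finset.mul_sum, ← sum_inner]
      _ = 2 * ρ ^ 2 := by rw [hw1, h0, inner_zero_left]; ring
  have hB : ∀ j, ∑ i, w i * dist (z i) (z j) ^ 2 ≤ (1 - w j) * D ^ 2 := by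
    intro j
    rw [← Finset.sum_erase_add _ _ (Finset.mem_univ j), dist_self]
    have h1 : ∑ i ∈ Finset.univ.erase j, w i * dist (z i) (z j) ^ 2
        ≤ ∑ i ∈ Finset.univ.erase j, w i * D ^ 2 := by
      refine Finset.sum_le_sum fun i _ => ?_
      refine mul_le_mul_of_nonneg_left ?_ (hw0 i).le
      exact pow_le_pow_left₀ dist_nonneg (hdist _ (hzS i) _ (hzS j)) 2
    have h2 : ∑ i ∈ Finset.univ.erase j, w i = 1 - w j := by
      rw [← hw1, Finset.sum_erase_eq_sub (Finset.mem_univ j)]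
    calc ∑ i ∈ Finset.univ.erase j, w i * dist (z i) (z j) ^ 2 + w j * 0 ^ 2
        ≤ ∑ i ∈ Finset.univ.erase j, w i * D ^ 2 := by simpa using h1
      _ = (1 - w j) * D ^ 2 := by rw [← Finset.sum_mul, h2]
  -- combine
  have key : 2 * ρ ^ 2 ≤ (1 - ∑ j, w j ^ 2) * D ^ 2 := by
    calc 2 * ρ ^ 2 = ∑ j, w j * (2 * ρ ^ 2) := by rw [← Finset.sum_mul, hw1, one_mul]
      _ = ∑ j, w j * (∑ i, w i * dist (z i) (z j) ^ 2) := by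
          exact Finset.sum_congr rfl fun j _ => by rw [hA j]
      _ ≤ ∑ j, w j * ((1 - w j) * D ^ 2) :=
          Finset.sum_le_sum fun j _ => mul_le_mul_of_nonneg_left (hB j) (hw0 j).le
      _ = (∑ j, (w j - w j ^ 2)) * D ^ 2 := by
          rw [Finset.sum_mul]; exact Finset.sum_congr rfl fun j _ => by ring
      _ = (1 - ∑ j, w j ^ 2) * D ^ 2 := by rw [Finset.sum_sub_distrib, hw1]
  have hNpos : (0:ℝ) < (n : ℝ) + 1 := by positivity
  have hcs : (1:ℝ) ≤ (Fintype.card ι : ℝ) * ∑ j, w j ^ 2 := by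
    have := sq_sum_le_card_mul_sum_sq (s := (Finset.univ : Finset ι)) (f := w)
    simpa [hw1] using this
  have hs : 1 / ((n:ℝ) + 1) ≤ ∑ j, w j ^ 2 := by
    rw [div_le_iff₀ hNpos]
    have hsum0 : (0:ℝ) ≤ ∑ j, w j ^ 2 := by positivity
    nlinarith [hcs, hcard]
  have hfin2 : ρ ^ 2 ≤ D ^ 2 * ((n:ℝ) / (2 * ((n:ℝ) + 1))) := by
    have h3 : (1 - ∑ j, w j ^ 2) ≤ (n:ℝ) / ((n:ℝ) + 1) := by
      have : (n:ℝ) / ((n:ℝ) + 1) = 1 - 1 / ((n:ℝ) + 1) := by field_simp; ring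
      linarith
    have h4 : 2 * ρ ^ 2 ≤ ((n:ℝ) / ((n:ℝ) + 1)) * D ^ 2 :=
      le_trans key (mul_le_mul_of_nonneg_right h3 (sq_nonneg D))
    have h5 : D ^ 2 * ((n:ℝ) / (2 * ((n:ℝ) + 1))) = (((n:ℝ) / ((n:ℝ) + 1)) * D ^ 2) / 2 := by
      field_simp
    linarith
  calc ρ = Real.sqrt (ρ ^ 2) := (Real.sqrt_sq hρ0).symm
    _ ≤ Real.sqrt (D ^ 2 * ((n:ℝ) / (2 * ((n:ℝ) + 1)))) := Real.sqrt_le_sqrt hfin2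
    _ = D * Real.sqrt ((n:ℝ) / (2 * ((n:ℝ) + 1))) := by
        rw [Real.sqrt_mul (sq_nonneg D), Real.sqrt_sq hD0]


theorem stmt7 (n : ℕ) (X : Set (EuclideanSpace ℝ (Fin n))) (hX : IsCompact X)
    (D : ℝ) (hD : Metric.diam X = D) :
    ∃ c, X ⊆ Metric.closedBall c (D * Real.sqrt ((n : ℝ) / (2 * ((n : ℝ) + 1)))) := by
  classical
  set r := D * Real.sqrt ((n : ℝ) / (2 * ((n : ℝ) + 1))) with hr
  have hD0 : 0 ≤ D := hD ▸ Metric.diam_nonneg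
  have hdistX : ∀ p ∈ X, ∀ q ∈ X, dist p q ≤ D := fun p hp q hq =>
    hD ▸ Metric.dist_le_diam_of_mem hX.isBounded hp hq
  have hhelly : (⋂ x : X, Metric.closedBall (x : EuclideanSpace ℝ (Fin n)) r).Nonempty := by
    apply Convex.helly_theorem_compact' (𝕜 := ℝ)
    · exact fun x => convex_closedBall _ _
    · exact fun x => isCompact_closedBall _ _
    · intro I _
      rcases I.eq_empty_or_nonempty with rfl | hIne
      · simp
      · have hSne : (I.image Subtype.val).Nonempty := hIne.image _
        have hSX : ∀ p ∈ I.image Subtype.val, p ∈ X := by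
          intro p hp
          rw [Finset.mem_image] at hp
          obtain ⟨x, _, rfl⟩ := hp
          exact x.2
        obtain ⟨c, hc⟩ := jung_finset n (by simp [finrank_euclideanSpace_fin]) D hD0
          (I.image Subtype.val) hSne
          (fun p hp q hq => hdistX p (hSX p hp) q (hSX q hq))
        refine ⟨c, ?_⟩
        rw [Set.mem_iInter₂]
        intro i hi
        rw [Metric.mem_closedBall]
        exact hc _ (Finset.mem_image_of_mem _ hi)
  obtain ⟨c, hc⟩ := hhelly
  rw [Set.mem_iInter] at hc
  refine ⟨c, fun p hp => ?_⟩
  rw [Metric.mem_closedBall, dist_comm]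
  exact Metric.mem_closedBall.1 (hc ⟨p, hp⟩)
end

section
/- If $\{Y_t : 0 < t < T\}$ is a nested family of bounded subsets of $\mathbb{R}^n$ (i.e., $Y_s \subseteq Y_t$ whenever $s \leq t$), then $\mathrm{conv}\left(\bigcap_{t>0} \overline{Y_t}\right) = \bigcap_{t>0} \overline{\mathrm{conv}(Y_t)}$. -/
open Set

/-- Summing over an embedded index set when the function vanishes off the range. -/
lemma sum_emb_aux {ι κ M : Type*} [Fintype ι] [Fintype κ] [AddCommMonoid M]
    (e : ι ↪ κ) (g : κ → M) (hg : ∀ j, (∀ i, e i ≠ j) → g j = 0) :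
    ∑ j, g j = ∑ i, g (e i) := by
  classical
  have h1 : ∑ j ∈ Finset.univ.image e, g j = ∑ i, g (e i) :=
    Finset.sum_image (fun i _ j _ h => e.injective h)
  rw [← h1]
  refine (Finset.sum_subset (Finset.subset_univ _) ?_).symm
  intro j _ hj
  refine hg j fun i hij => hj ?_
  rw [Finset.mem_image]
  exact ⟨i, Finset.mem_univ i, hij⟩

/-- Carathéodory with exactly `n+1` points. -/
lemma carat_fix {n : ℕ} {s : Set (EuclideanSpace ℝ (Fin n))} {x : EuclideanSpace ℝ (Fin n)}
    (hx : x ∈ convexHull ℝ s) :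
    ∃ (w : Fin (n + 1) → ℝ) (f : Fin (n + 1) → EuclideanSpace ℝ (Fin n)),
      (∀ i, 0 ≤ w i) ∧ ∑ i, w i = 1 ∧ (∀ i, f i ∈ s) ∧ ∑ i, w i • f i = x := by
  classical
  obtain ⟨ι, hfin, z, w, hzs, hai, hpos, hsum, hxx⟩ := eq_pos_convex_span_of_mem_convexHull hx
  have hcard : Fintype.card ι ≤ n + 1 := by
    refine hai.card_le_finrank_succ.trans ?_
    have h1 : Module.finrank ℝ (vectorSpan ℝ (Set.range z)) ≤
        Module.finrank ℝ (EuclideanSpace ℝ (Fin n)) := Submodule.finrank_le _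
    have h2 : Module.finrank ℝ (EuclideanSpace ℝ (Fin n)) = n := by
      simp [finrank_euclideanSpace]
    omega
  obtain ⟨e⟩ : Nonempty (ι ↪ Fin (n + 1)) := by
    refine Function.Embedding.nonempty_of_card_le ?_
    simpa using hcard
  have hιne : Nonempty ι := by
    by_contra h
    rw [not_nonempty_iff] at h
    simp at hsum
  obtain ⟨i₀⟩ := hιne
  set w' : Fin (n + 1) → ℝ := fun j => if h : ∃ i, e i = j then w h.choose else 0 with hw'
  set f' : Fin (n + 1) → EuclideanSpace ℝ (Fin n) :=
    fun j => if h : ∃ i, e i = j then z h.choose else z i₀ with hf'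
  have hw'e : ∀ i, w' (e i) = w i := by
    intro i
    have h : ∃ i', e i' = e i := ⟨i, rfl⟩
    simp only [hw', dif_pos h]
    exact congrArg w (e.injective h.choose_spec)
  have hf'e : ∀ i, f' (e i) = z i := by
    intro i
    have h : ∃ i', e i' = e i := ⟨i, rfl⟩
    simp only [hf', dif_pos h]
    exact congrArg z (e.injective h.choose_spec)
  have hw'0 : ∀ j, (∀ i, e i ≠ j) → w' j = 0 := by
    intro j hj
    simp only [hw']
    rw [dif_neg]
    rintro ⟨i, rfl⟩
    exact hj i rfl
  refine ⟨w', f', ?_, ?_, ?_, ?_⟩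
  · intro j
    simp only [hw']
    split
    · exact (hpos _).le
    · exact le_refl 0
  · rw [sum_emb_aux e w' hw'0]
    simp only [hw'e]
    exact hsum
  · intro j
    simp only [hf']
    split
    · exact hzs (Set.mem_range_self _)
    · exact hzs (Set.mem_range_self _)
  · rw [sum_emb_aux e (fun j => w' j • f' j) (fun j hj => by show w' j • f' j = 0; rw [hw'0 j hj, zero_smul])]
    simp only [hw'e, hf'e]
    exact hxx

/-- The convex hull of a compact set in finite dimensions is compact. -/
lemma conv_compact {n : ℕ} {K : Set (EuclideanSpace ℝ (Fin n))} (hK : IsCompact K) :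
    IsCompact (convexHull ℝ K) := by
  have himg : convexHull ℝ K =
      (fun p : (Fin (n + 1) → ℝ) × (Fin (n + 1) → EuclideanSpace ℝ (Fin n)) =>
        ∑ i, p.1 i • p.2 i) ''
        (stdSimplex ℝ (Fin (n + 1)) ×ˢ Set.pi Set.univ fun _ => K) := by
    ext x
    constructor
    · intro hx
      obtain ⟨w, f, h0, h1, hf, hx'⟩ := carat_fix hx
      exact ⟨(w, f), ⟨⟨h0, h1⟩, fun i _ => hf i⟩, hx'⟩
    · rintro ⟨⟨w, f⟩, ⟨⟨h0, h1⟩, hf⟩, rfl⟩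
      exact (convex_convexHull ℝ K).sum_mem (fun i _ => h0 i) h1
        (fun i _ => subset_convexHull ℝ K (hf i (Set.mem_univ i)))
  rw [himg]
  refine (((isCompact_stdSimplex _ _).prod (isCompact_univ_pi fun _ => hK))).image ?_
  exact continuous_finset_sum _ fun i _ =>
    ((continuous_apply i).comp continuous_fst).smul ((continuous_apply i).comp continuous_snd)

theorem stmt8 (n : ℕ) (T : ℝ) (hT : 0 < T)
    (Y : ℝ → Set (EuclideanSpace ℝ (Fin n)))
    (hbdd : ∀ t ∈ Set.Ioo 0 T, Bornology.IsBounded (Y t))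
    (hnested : ∀ s ∈ Set.Ioo 0 T, ∀ t ∈ Set.Ioo 0 T, s ≤ t → Y s ⊆ Y t) :
    convexHull ℝ (⋂ t ∈ Set.Ioo 0 T, closure (Y t)) =
      ⋂ t ∈ Set.Ioo 0 T, closure (convexHull ℝ (Y t)) := by
  classical
  apply Set.Subset.antisymm
  · refine Set.subset_iInter₂ fun t ht => ?_
    refine convexHull_min ?_ (convex_convexHull ℝ (Y t)).closure
    exact (Set.biInter_subset_of_mem ht).trans (closure_mono (subset_convexHull ℝ _))
  · intro x hx
    simp only [Set.mem_iInter] at hx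
    have hKcomp : ∀ t ∈ Set.Ioo 0 T, IsCompact (closure (Y t)) := fun t ht =>
      Metric.isCompact_of_isClosed_isBounded isClosed_closure (hbdd t ht).closure
    have hxK : ∀ t ∈ Set.Ioo 0 T, x ∈ convexHull ℝ (closure (Y t)) := by
      intro t ht
      have hcl : IsClosed (convexHull ℝ (closure (Y t))) := (conv_compact (hKcomp t ht)).isClosed
      exact closure_minimal (convexHull_mono subset_closure) hcl (hx t ht)
    set φ : (Fin (n + 1) → ℝ) × (Fin (n + 1) → EuclideanSpace ℝ (Fin n)) →
        EuclideanSpace ℝ (Fin n) := fun p => ∑ i, p.1 i • p.2 i with hφ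
    have hφc : Continuous φ := continuous_finset_sum _ fun i _ =>
      ((continuous_apply i).comp continuous_fst).smul ((continuous_apply i).comp continuous_snd)
    set F : ↥(Set.Ioo (0:ℝ) T) → Set ((Fin (n + 1) → ℝ) × (Fin (n + 1) → EuclideanSpace ℝ (Fin n))) :=
      fun t => (stdSimplex ℝ (Fin (n + 1)) ×ˢ Set.pi Set.univ fun _ => closure (Y t.1)) ∩
        φ ⁻¹' {x} with hF
    have hne : Nonempty ↥(Set.Ioo (0:ℝ) T) := ⟨⟨T / 2, half_pos hT, half_lt_self hT⟩⟩
    have hFne : ∀ t, (F t).Nonempty := by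
      rintro ⟨t, ht⟩
      obtain ⟨w, f, h0, h1, hf, hx'⟩ := carat_fix (hxK t ht)
      exact ⟨(w, f), ⟨⟨h0, h1⟩, fun i _ => hf i⟩, hx'⟩
    have hFcl : ∀ t, IsClosed (F t) := fun t =>
      (((isClosed_stdSimplex _ _).prod (isClosed_set_pi fun _ _ => isClosed_closure)).inter
        (isClosed_singleton.preimage hφc))
    have hFcomp : ∀ t, IsCompact (F t) := fun t =>
      ((isCompact_stdSimplex _ _).prod (isCompact_univ_pi fun _ => hKcomp t.1 t.2)).of_isClosed_subset
        (hFcl t) Set.inter_subset_left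
    have hmono : ∀ a b : ↥(Set.Ioo (0:ℝ) T), a.1 ≤ b.1 → F a ⊆ F b := by
      intro a b hab
      refine Set.inter_subset_inter_left _ ?_
      refine Set.prod_mono_right ?_
      refine Set.pi_mono fun i _ => ?_
      exact closure_mono (hnested a.1 a.2 b.1 b.2 hab)
    have hdir : Directed (· ⊇ ·) F := by
      intro a b
      rcases le_total a.1 b.1 with h | h
      · exact ⟨a, subset_rfl, hmono a b h⟩
      · exact ⟨b, hmono b a h, subset_rfl⟩
    obtain ⟨⟨w, f⟩, hp⟩ :=
      IsCompact.nonempty_iInter_of_directed_nonempty_isCompact_isClosed F hdir hFne hFcomp hFcl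
    simp only [Set.mem_iInter] at hp
    have hw : w ∈ stdSimplex ℝ (Fin (n + 1)) := (hp hne.some).1.1
    have hx' : ∑ i, w i • f i = x := (hp hne.some).2
    have hfi : ∀ i, f i ∈ ⋂ t ∈ Set.Ioo 0 T, closure (Y t) := by
      intro i
      rw [Set.mem_iInter₂]
      intro t ht
      exact (hp ⟨t, ht⟩).1.2 i (Set.mem_univ i)
    rw [← hx']
    exact (convex_convexHull ℝ _).sum_mem (fun i _ => hw.1 i) hw.2
      (fun i _ => subset_convexHull ℝ _ (hfi i))
end

section
/- If $\{Z_t : t > 0\}$ is a nested family of compact subsets of $\mathbb{R}^n$ (with $Z_s \subseteq Z_t$ for $s \leq t$), then $\mathrm{conv}\left(\bigcap_{t>0} Z_t\right) = \bigcap_{t>0} \mathrm{conv}(Z_t)$. -/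
open Set Finset Function

private lemma sum_extend_aux {ι κ M : Type*} [Fintype ι] [Fintype κ] [DecidableEq κ] [AddCommMonoid M]
    (e : ι ↪ κ) (f : κ → M) (hf : ∀ j, (¬ ∃ i, e i = j) → f j = 0) :
    ∑ j, f j = ∑ i, f (e i) := by
  rw [← Finset.sum_image (g := fun i => e i) (f := f) (s := Finset.univ)
    (fun i _ j _ h => e.injective h)]
  refine (Finset.sum_subset (Finset.subset_univ _) fun j _ hj => ?_).symm
  refine hf j fun ⟨i, hi⟩ => hj ?_
  simp [Finset.mem_image, ← hi]

private lemma carath {n : ℕ} {s : Set (EuclideanSpace ℝ (Fin n))}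
    {x : EuclideanSpace ℝ (Fin n)} (hx : x ∈ convexHull ℝ s) :
    ∃ (w : Fin (n + 1) → ℝ) (p : Fin (n + 1) → EuclideanSpace ℝ (Fin n)),
      (∀ i, 0 ≤ w i) ∧ ∑ i, w i = 1 ∧ (∀ i, p i ∈ s) ∧ ∑ i, w i • p i = x := by
  obtain ⟨x₀, hx₀⟩ := convexHull_nonempty_iff.mp ⟨x, hx⟩
  obtain ⟨ι, hι, z, w, hzs, hai, hw0, hw1, hsum⟩ :=
    eq_pos_convex_span_of_mem_convexHull hx
  have hcard : Fintype.card ι ≤ n + 1 := by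
    refine hai.card_le_finrank_succ.trans ?_
    have h1 : Module.finrank ℝ (vectorSpan ℝ (Set.range z)) ≤
        Module.finrank ℝ (EuclideanSpace ℝ (Fin n)) := Submodule.finrank_le _
    rw [finrank_euclideanSpace_fin] at h1
    omega
  obtain ⟨e⟩ : Nonempty (ι ↪ Fin (n + 1)) := by
    refine Function.Embedding.nonempty_of_card_le ?_
    simpa using hcard
  refine ⟨Function.extend e w 0, Function.extend e z (fun _ => x₀),
    ?_, ?_, ?_, ?_⟩
  · intro j
    by_cases h : ∃ i, e i = j
    · obtain ⟨i, rfl⟩ := h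
      rw [e.injective.extend_apply]
      exact (hw0 i).le
    · rw [Function.extend_apply' _ _ _ h]; rfl
  · rw [sum_extend_aux e _ (fun j hj => by rw [Function.extend_apply' _ _ _ hj]; rfl)]
    simpa [e.injective.extend_apply] using hw1
  · intro j
    by_cases h : ∃ i, e i = j
    · obtain ⟨i, rfl⟩ := h
      rw [e.injective.extend_apply]
      exact hzs ⟨i, rfl⟩
    · rw [Function.extend_apply' _ _ _ h]; exact hx₀
  · rw [sum_extend_aux e _ (fun j hj => by
      rw [Function.extend_apply' _ _ _ hj]; simp)]
    simp_rw [e.injective.extend_apply]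
    exact hsum

theorem stmt9 (n : ℕ) (Z : ℝ → Set (EuclideanSpace ℝ (Fin n)))
    (hcpt : ∀ t, 0 < t → IsCompact (Z t))
    (hnested : ∀ s t, 0 < s → s ≤ t → Z s ⊆ Z t) :
    convexHull ℝ (⋂ t ∈ Set.Ioi (0 : ℝ), Z t) =
      ⋂ t ∈ Set.Ioi (0 : ℝ), convexHull ℝ (Z t) := by
  apply Set.Subset.antisymm
  · refine Set.subset_iInter₂ fun t ht => convexHull_mono (Set.biInter_subset_of_mem ht)
  · intro x hx
    simp only [Set.mem_iInter] at hx
    -- representation sets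
    set F : {t : ℝ // 0 < t} → Set ((Fin (n + 1) → ℝ) × (Fin (n + 1) → EuclideanSpace ℝ (Fin n))) :=
      fun t => {q | (∀ i, 0 ≤ q.1 i) ∧ ∑ i, q.1 i = 1 ∧ (∀ i, q.2 i ∈ Z t) ∧
        ∑ i, q.1 i • q.2 i = x} with hF
    have hclosed_cond : IsClosed {q : (Fin (n + 1) → ℝ) × (Fin (n + 1) → EuclideanSpace ℝ (Fin n)) |
        ∑ i, q.1 i • q.2 i = x} := by
      have : Continuous fun q : (Fin (n + 1) → ℝ) × (Fin (n + 1) → EuclideanSpace ℝ (Fin n)) =>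
          ∑ i, q.1 i • q.2 i := by
        refine continuous_finset_sum _ fun i _ => ?_
        exact ((continuous_apply i).comp continuous_fst).smul
          ((continuous_apply i).comp continuous_snd)
      exact isClosed_singleton.preimage this
    have hFeq : ∀ t : {t : ℝ // 0 < t}, F t =
        (stdSimplex ℝ (Fin (n + 1)) ×ˢ Set.pi Set.univ (fun _ : Fin (n + 1) => Z t)) ∩
          {q | ∑ i, q.1 i • q.2 i = x} := by
      intro t
      ext q
      simp [hF, stdSimplex, Set.mem_pi, and_assoc]
    have hFclosed : ∀ t, IsClosed (F t) := by
      intro t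
      rw [hFeq]
      exact (((isClosed_stdSimplex _ _).prod
        (isClosed_set_pi fun i _ => (hcpt t t.2).isClosed)).inter hclosed_cond)
    have hFcpt : ∀ t, IsCompact (F t) := by
      intro t
      rw [hFeq]
      exact (((isCompact_stdSimplex _ _).prod
        (isCompact_univ_pi fun _ => hcpt t t.2)).inter_right hclosed_cond)
    have hFne : ∀ t : {t : ℝ // 0 < t}, (F t).Nonempty := by
      intro t
      obtain ⟨w, p, h0, h1, hp, hs⟩ := carath (hx t t.2)
      exact ⟨(w, p), h0, h1, hp, hs⟩
    have hFmono : ∀ s t : {t : ℝ // 0 < t}, s ≤ t → F s ⊆ F t := by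
      rintro s t hst q ⟨h0, h1, hp, hs⟩
      exact ⟨h0, h1, fun i => hnested s t s.2 hst (hp i), hs⟩
    have hdir : Directed (· ⊇ ·) F := by
      intro a b
      rcases le_total a b with h | h
      · exact ⟨a, subset_refl _, hFmono a b h⟩
      · exact ⟨b, hFmono b a h, subset_refl _⟩
    have : Nonempty {t : ℝ // 0 < t} := ⟨⟨1, one_pos⟩⟩
    obtain ⟨⟨w, p⟩, hq⟩ :=
      IsCompact.nonempty_iInter_of_directed_nonempty_isCompact_isClosed F hdir hFne hFcpt hFclosed
    simp only [Set.mem_iInter] at hq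
    have h0 := (hq ⟨1, one_pos⟩).1
    have h1 := (hq ⟨1, one_pos⟩).2.1
    have hs := (hq ⟨1, one_pos⟩).2.2.2
    refine mem_convexHull_of_exists_fintype w p h0 h1 ?_ hs
    intro i
    simp only [Set.mem_iInter]
    intro t ht
    exact (hq ⟨t, ht⟩).2.2.1 i
end

section
/- Let $X$ be a metric space, $E$ a normed vector space, and $f : X \to E$ any function. Define $F(x) = \bigcap_{\varepsilon > 0} \overline{\mathrm{conv}(f(B(x,\varepsilon)))}$. Then $F$ is upper semi-continuous: if $x_k \to x$, $y_k \in F(x_k)$, and $y_k \to y$, then $y \in F(x)$. -/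
theorem stmt12 {X E : Type*} [MetricSpace X] [NormedAddCommGroup E] [NormedSpace ℝ E]
    (f : X → E)
    (F : X → Set E)
    (hF : ∀ x, F x = ⋂ ε ∈ Set.Ioi (0 : ℝ), closure (convexHull ℝ (f '' Metric.ball x ε)))
    (u : ℕ → X) (x : X) (hu : Filter.Tendsto u Filter.atTop (nhds x))
    (y : ℕ → E) (hy : ∀ k, y k ∈ F (u k))
    (ylim : E) (hylim : Filter.Tendsto y Filter.atTop (nhds ylim)) :
    ylim ∈ F x := by
  rw [hF]
  simp only [Set.mem_iInter]
  intro ε hε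
  have hε' : (0:ℝ) < ε := hε
  -- eventually dist (u k) x < ε/2
  have hev : ∀ᶠ k in Filter.atTop, dist (u k) x < ε / 2 := by
    have := Metric.tendsto_nhds.mp hu (ε/2) (by linarith)
    exact this
  have hmem : ∀ᶠ k in Filter.atTop,
      y k ∈ closure (convexHull ℝ (f '' Metric.ball x ε)) := by
    filter_upwards [hev] with k hk
    have hball : Metric.ball (u k) (ε/2) ⊆ Metric.ball x ε := by
      intro z hz
      have : dist z x ≤ dist z (u k) + dist (u k) x := dist_triangle z (u k) x
      have hz' : dist z (u k) < ε/2 := hz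
      simp only [Metric.mem_ball] at *
      linarith
    have h1 : y k ∈ closure (convexHull ℝ (f '' Metric.ball (u k) (ε/2))) := by
      have := hy k
      rw [hF] at this
      simp only [Set.mem_iInter] at this
      exact this (ε/2) (by simp; linarith)
    exact closure_mono (convexHull_mono (Set.image_mono hball)) h1
  exact isClosed_closure.mem_of_tendsto hylim hmem
end

section
/- Let $X$ be a metric space and $f : X \to \mathbb{R}^n$ a locally bounded function. Then for every $x \in X$, $\bigcap_{\varepsilon > 0} \overline{\mathrm{conv}(f(B(x,\varepsilon)))} = \mathrm{conv}\left(\bigcap_{\varepsilon > 0} \overline{f(B(x,\varepsilon))}\right)$. -/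
open Set Metric

lemma aux_key_sum {M : Type*} [AddCommMonoid M] {m d : ℕ} (hmd : m ≤ d) (G : Fin m → M) :
    (∑ i : Fin d, if h : (i : ℕ) < m then G ⟨i, h⟩ else 0) = ∑ j : Fin m, G j := by
  rw [Fin.sum_univ_eq_sum_range (fun i => if h : i < m then G ⟨i, h⟩ else 0) d,
    ← Finset.sum_subset (Finset.range_subset_range.mpr hmd)
      (fun i _ hi => by rw [dif_neg (by simpa using hi)]),
    ← Fin.sum_univ_eq_sum_range (fun i => if h : i < m then G ⟨i, h⟩ else 0) m]
  exact Finset.sum_congr rfl fun j _ => by simp [j.is_lt]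

lemma aux_isCompact_convexHull {E : Type*} [NormedAddCommGroup E] [NormedSpace ℝ E]
    [FiniteDimensional ℝ E] {s : Set E} (hs : IsCompact s) :
    IsCompact (convexHull ℝ s) := by
  rcases s.eq_empty_or_nonempty with rfl | ⟨s₀, hs₀⟩
  · simp
  set d := Module.finrank ℝ E + 1 with hd
  have hcont : Continuous (fun p : (Fin d → ℝ) × (Fin d → E) => ∑ i, p.1 i • p.2 i) := by
    fun_prop
  have hcomp : IsCompact ((stdSimplex ℝ (Fin d)) ×ˢ (Set.univ.pi fun _ : Fin d => s)) :=
    (isCompact_stdSimplex ℝ _).prod (isCompact_univ_pi fun _ => hs)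
  have himg : convexHull ℝ s =
      (fun p : (Fin d → ℝ) × (Fin d → E) => ∑ i, p.1 i • p.2 i) ''
        ((stdSimplex ℝ (Fin d)) ×ˢ (Set.univ.pi fun _ : Fin d => s)) := by
    apply Subset.antisymm
    · intro x hx
      rw [convexHull_eq_union] at hx
      simp only [Set.mem_iUnion, exists_prop] at hx
      obtain ⟨t, hts, hai, hxt⟩ := hx
      rw [Finset.convexHull_eq] at hxt
      obtain ⟨w, hw0, hw1, hwx⟩ := hxt
      rw [t.centerMass_eq_of_sum_1 _ hw1] at hwx
      set m := t.card with hm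
      have hmd : m ≤ d := by
        have h1 := hai.card_le_finrank_succ
        rw [Fintype.card_coe] at h1
        exact h1.trans (Nat.add_le_add_right (Submodule.finrank_le _) 1)
      set e := t.equivFin with he
      set q : Fin d → ℝ := fun i => if h : (i : ℕ) < m then w (e.symm ⟨i, h⟩) else 0 with hq
      set p : Fin d → E := fun i => if h : (i : ℕ) < m then (e.symm ⟨i, h⟩ : E) else s₀ with hp
      refine ⟨⟨q, p⟩, ⟨⟨fun i => ?_, ?_⟩, fun i _ => ?_⟩, ?_⟩
      · show 0 ≤ q i
        simp only [hq]
        split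
        · exact hw0 _ (Finset.coe_mem _)
        · exact le_rfl
      · show (∑ i : Fin d, q i) = 1
        simp only [hq]
        rw [aux_key_sum hmd (fun j => w (e.symm j)), Equiv.sum_comp e.symm (fun y : ↥t => w ↑y),
          Finset.sum_coe_sort t w]
        exact hw1
      · show p i ∈ s
        simp only [hp]
        split
        · exact hts (Finset.coe_mem _)
        · exact hs₀
      · show (∑ i : Fin d, q i • p i) = x
        have hterm : ∀ i : Fin d, q i • p i =
            if h : (i : ℕ) < m then w (e.symm ⟨i, h⟩) • (e.symm ⟨i, h⟩ : E) else 0 := by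
          intro i
          simp only [hq, hp]
          split <;> simp
        calc (∑ i : Fin d, q i • p i)
            = ∑ i : Fin d, if h : (i : ℕ) < m then
                w (e.symm ⟨i, h⟩) • (e.symm ⟨i, h⟩ : E) else 0 :=
              Finset.sum_congr rfl fun i _ => hterm i
          _ = ∑ j : Fin m, w (e.symm j) • (e.symm j : E) :=
              aux_key_sum hmd (fun j => w (e.symm j) • (e.symm j : E))
          _ = ∑ y : ↥t, w ↑y • (↑y : E) :=
              Equiv.sum_comp e.symm (fun y : ↥t => w ↑y • (↑y : E))
          _ = ∑ y ∈ t, w y • y := Finset.sum_coe_sort t (fun y => w y • y)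
          _ = x := by simpa using hwx
    · rintro _ ⟨⟨q, p⟩, ⟨⟨hq0, hq1⟩, hp⟩, rfl⟩
      exact (convex_convexHull ℝ s).sum_mem (fun i _ => hq0 i) hq1
        (fun i _ => subset_convexHull ℝ s (hp i (Set.mem_univ i)))
  rw [himg]
  exact hcomp.image hcont

theorem stmt13 {X : Type*} [MetricSpace X] (n : ℕ)
    (f : X → EuclideanSpace ℝ (Fin n))
    (hlb : ∀ x : X, ∃ U ∈ nhds x, Bornology.IsBounded (f '' U)) :
    ∀ x : X,
      ⋂ ε ∈ Set.Ioi (0 : ℝ), closure (convexHull ℝ (f '' Metric.ball x ε)) =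
        convexHull ℝ (⋂ ε ∈ Set.Ioi (0 : ℝ), closure (f '' Metric.ball x ε)) := by
  intro x
  obtain ⟨U, hU, hUb⟩ := hlb x
  obtain ⟨ε₀, hε₀, hballU⟩ := Metric.mem_nhds_iff.mp hU
  have hb : ∀ ε ≤ ε₀, Bornology.IsBounded (f '' Metric.ball x ε) := fun ε hε =>
    hUb.subset (Set.image_mono ((Metric.ball_subset_ball hε).trans hballU))
  have hcompcl : ∀ ε ∈ Set.Ioc (0 : ℝ) ε₀, IsCompact (closure (f '' Metric.ball x ε)) :=
    fun ε hε => Metric.isCompact_of_isClosed_isBounded isClosed_closure ((hb ε hε.2).closure)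
  have hnecl : ∀ ε ∈ Set.Ioi (0 : ℝ), (closure (f '' Metric.ball x ε)).Nonempty :=
    fun ε hε => (((Metric.nonempty_ball.mpr hε).image f)).closure
  set K : Set (EuclideanSpace ℝ (Fin n)) :=
    ⋂ ε ∈ Set.Ioi (0 : ℝ), closure (f '' Metric.ball x ε) with hKdef
  have hKsub : K ⊆ closure (f '' Metric.ball x ε₀) :=
    Set.biInter_subset_of_mem (Set.mem_Ioi.mpr hε₀)
  have hKcomp : IsCompact K :=
    Metric.isCompact_of_isClosed_isBounded
      (isClosed_biInter fun _ _ => isClosed_closure)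
      (((hb ε₀ le_rfl).closure).subset hKsub)
  have hchK : IsCompact (convexHull ℝ K) := aux_isCompact_convexHull hKcomp
  apply Set.Subset.antisymm
  · intro y hy
    by_contra hyK
    obtain ⟨ℓ, u, hsep, hyu⟩ :=
      geometric_hahn_banach_closed_point (convex_convexHull ℝ K) hchK.isClosed hyK
    haveI : Nonempty (Set.Ioc (0 : ℝ) ε₀) := ⟨⟨ε₀, hε₀, le_rfl⟩⟩
    set C : Set.Ioc (0 : ℝ) ε₀ → Set (EuclideanSpace ℝ (Fin n)) := fun ε =>
      closure (f '' Metric.ball x ε.1) ∩ {z | ℓ y ≤ ℓ z} with hCdef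
    have hhalfclosed : IsClosed {z : EuclideanSpace ℝ (Fin n) | ℓ y ≤ ℓ z} :=
      isClosed_le continuous_const ℓ.continuous
    have hCmono : ∀ (a b : Set.Ioc (0 : ℝ) ε₀), a.1 ≤ b.1 → C a ⊆ C b := fun a b hab =>
      Set.inter_subset_inter_left _ (closure_mono (Set.image_mono (Metric.ball_subset_ball hab)))
    have hCdir : Directed (· ⊇ ·) C := fun a b => by
      refine ⟨⟨min a.1 b.1, lt_min a.2.1 b.2.1, (min_le_left _ _).trans a.2.2⟩, ?_, ?_⟩
      · exact hCmono _ _ (min_le_left _ _)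
      · exact hCmono _ _ (min_le_right _ _)
    have hCne : ∀ ε : Set.Ioc (0 : ℝ) ε₀, (C ε).Nonempty := by
      rintro ⟨ε, hε⟩
      obtain ⟨z, hzK, hzmax⟩ := (hcompcl ε hε).exists_isMaxOn (hnecl ε hε.1)
        (ℓ.continuous.continuousOn)
      refine ⟨z, hzK, ?_⟩
      have hsubhalf : closure (convexHull ℝ (f '' Metric.ball x ε)) ⊆ {w | ℓ w ≤ ℓ z} :=
        closure_minimal
          (convexHull_min (fun w hw => hzmax (subset_closure hw))
            (convex_halfSpace_le ℓ.toLinearMap.isLinear _))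
          (isClosed_le ℓ.continuous continuous_const)
      have hyε : y ∈ closure (convexHull ℝ (f '' Metric.ball x ε)) :=
        Set.mem_iInter₂.mp hy ε hε.1
      exact hsubhalf hyε
    obtain ⟨z, hz⟩ := IsCompact.nonempty_iInter_of_directed_nonempty_isCompact_isClosed C hCdir
      hCne (fun ε => ((hcompcl ε.1 ε.2).inter_right hhalfclosed))
      (fun ε => isClosed_closure.inter hhalfclosed)
    have hzC : ∀ ε : Set.Ioc (0 : ℝ) ε₀, z ∈ C ε := Set.mem_iInter.mp hz
    have hzK : z ∈ K := by
      rw [hKdef]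
      refine Set.mem_iInter₂.mpr fun ε hε => ?_
      have h1 := (hzC ⟨min ε ε₀, lt_min (Set.mem_Ioi.mp hε) hε₀, min_le_right _ _⟩).1
      exact closure_mono (Set.image_mono (Metric.ball_subset_ball (min_le_left _ _))) h1
    have h2 : ℓ y ≤ ℓ z := (hzC ⟨ε₀, hε₀, le_rfl⟩).2
    have h3 : ℓ z < u := hsep z (subset_convexHull ℝ K hzK)
    linarith
  · refine Set.subset_iInter₂ fun ε hε => ?_
    have h1 : K ⊆ closure (convexHull ℝ (f '' Metric.ball x ε)) :=
      (Set.biInter_subset_of_mem hε).trans (closure_mono (subset_convexHull ℝ _))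
    exact convexHull_min h1 ((convex_convexHull ℝ _).closure)
end

section
/- Let $f : S^1_r \to \mathbb{R}$ be any function, let $m \geq 3$ be odd, and let $x_k = (r\cos(2\pi k/m), r\sin(2\pi k/m))$ for $k$ modulo $m$, with $S^1_r$ equipped with its intrinsic (arc length) metric. If for some $k$ either $f(x_k) \leq f(x_{k+(m+1)/2}) \leq f(x_{k+1})$ or $f(x_{k+1}) \leq f(x_{k+(m+1)/2}) \leq f(x_k)$, then $\mathrm{dist}(f) \geq \frac{2\pi r(m-2)}{3m}$. -/
open scoped Real

/-- The intrinsic (arc-length) distance between two points of the circle of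
radius `r` centered at the origin in the Euclidean plane. -/
noncomputable def geoDist14 (r : ℝ)
    (x y : Metric.sphere (0 : EuclideanSpace ℝ (Fin 2)) r) : ℝ :=
  r * Real.arccos ((inner ℝ (x : EuclideanSpace ℝ (Fin 2)) (y : EuclideanSpace ℝ (Fin 2)) : ℝ) / r ^ 2)

/-- The (additive) distortion of a function from the intrinsic circle to `ℝ`. -/
noncomputable def distortion14 (r : ℝ)
    (f : Metric.sphere (0 : EuclideanSpace ℝ (Fin 2)) r → ℝ) : ENNReal :=
  ⨆ p : Metric.sphere (0 : EuclideanSpace ℝ (Fin 2)) r ×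
        Metric.sphere (0 : EuclideanSpace ℝ (Fin 2)) r,
    ENNReal.ofReal |dist (f p.1) (f p.2) - geoDist14 r p.1 p.2|

theorem stmt14 (r : ℝ) (hr : 0 < r) (m : ℕ) (hmodd : Odd m) (hm3 : 3 ≤ m)
    (f : Metric.sphere (0 : EuclideanSpace ℝ (Fin 2)) r → ℝ)
    (x : ℤ → Metric.sphere (0 : EuclideanSpace ℝ (Fin 2)) r)
    (hx : ∀ j : ℤ, (x j : EuclideanSpace ℝ (Fin 2)) =
      (WithLp.equiv 2 (Fin 2 → ℝ)).symm
        ![r * Real.cos (2 * π * j / m), r * Real.sin (2 * π * j / m)])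
    (k : ℤ)
    (h : (f (x k) ≤ f (x (k + ((m : ℤ) + 1) / 2)) ∧
            f (x (k + ((m : ℤ) + 1) / 2)) ≤ f (x (k + 1))) ∨
         (f (x (k + 1)) ≤ f (x (k + ((m : ℤ) + 1) / 2)) ∧
            f (x (k + ((m : ℤ) + 1) / 2)) ≤ f (x k))) :
    ENNReal.ofReal (2 * π * r * ((m : ℝ) - 2) / (3 * m)) ≤ distortion14 r f := by
  have hπ := Real.pi_pos
  have hm0 : (0:ℝ) < m := by
    have : (3:ℝ) ≤ m := by exact_mod_cast hm3
    linarith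
  have hm' : (m:ℝ) ≠ 0 := ne_of_gt hm0
  have hmR : (3:ℝ) ≤ m := by exact_mod_cast hm3
  -- general geodesic distance formula
  have hgeo : ∀ i j : ℤ, geoDist14 r (x i) (x j)
      = r * Real.arccos (Real.cos (2 * π * ((i:ℝ) - j) / m)) := by
    intro i j
    unfold geoDist14
    rw [hx i, hx j]
    have hin : (inner ℝ ((WithLp.equiv 2 (Fin 2 → ℝ)).symm
          ![r * Real.cos (2*π*i/m), r * Real.sin (2*π*i/m)])
        ((WithLp.equiv 2 (Fin 2 → ℝ)).symm
          ![r * Real.cos (2*π*j/m), r * Real.sin (2*π*j/m)]) : ℝ)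
        = r^2 * Real.cos (2 * π * ((i:ℝ) - j) / m) := by
      have : 2 * π * ((i:ℝ) - j) / m = 2*π*i/m - 2*π*j/m := by ring
      rw [this]
      simp [PiLp.inner_apply, Fin.sum_univ_two, Real.cos_sub]
      ring
    rw [hin, mul_div_cancel_left₀ _ (by positivity : (r:ℝ)^2 ≠ 0)]
  obtain ⟨t, ht⟩ := hmodd
  have htZ : (m:ℤ) = 2*t + 1 := by exact_mod_cast ht
  have hq : ((m:ℤ) + 1) / 2 = (t:ℤ) + 1 := by omega
  have htR : (m:ℝ) = 2*t + 1 := by exact_mod_cast ht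
  have ht1 : (1:ℝ) ≤ (t:ℝ) := by
    have : 1 ≤ t := by omega
    exact_mod_cast this
  -- the three distances
  have hd1 : geoDist14 r (x (k+1)) (x k) = r * (2*π/m) := by
    rw [hgeo]
    have h1 : 2 * π * (((k:ℝ)+1) - k) / m = 2*π/m := by ring
    push_cast
    rw [h1, Real.arccos_cos]
    · positivity
    · rw [div_le_iff₀ hm0]; nlinarith
  have hd2 : geoDist14 r (x (k + ((m:ℤ)+1)/2)) (x k) = r * (π - π/m) := by
    rw [hgeo, hq]
    have h1 : 2 * π * (((k:ℝ) + ((t:ℝ)+1)) - k) / m = π + π/m := by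
      rw [htR]; field_simp; ring
    push_cast at h1 ⊢
    rw [h1]
    have h2 : Real.cos (π + π/m) = Real.cos (π - π/m) := by
      rw [Real.cos_pi_sub, Real.cos_add]
      simp
    rw [h2, Real.arccos_cos]
    · have : π/m ≤ π := by
        rw [div_le_iff₀ hm0]; nlinarith
      linarith
    · have : 0 < π/m := by positivity
      linarith
  have hd3 : geoDist14 r (x (k + ((m:ℤ)+1)/2)) (x (k+1)) = r * (π - π/m) := by
    rw [hgeo, hq]
    have h1 : 2 * π * (((k:ℝ) + ((t:ℝ)+1)) - ((k:ℝ)+1)) / m = π - π/m := by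
      rw [htR]; field_simp; ring
    push_cast at h1 ⊢
    rw [h1, Real.arccos_cos]
    · have : π/m ≤ π := by
        rw [div_le_iff₀ hm0]; nlinarith
      linarith
    · have : 0 < π/m := by positivity
      linarith
  -- extract bounds from the distortion
  set D := distortion14 r f with hD
  rcases eq_or_ne D ⊤ with hT | hT
  · rw [hT]; exact le_top
  have key : ∀ a b : Metric.sphere (0 : EuclideanSpace ℝ (Fin 2)) r,
      |dist (f a) (f b) - geoDist14 r a b| ≤ D.toReal := by
    intro a b
    have h1 : ENNReal.ofReal |dist (f a) (f b) - geoDist14 r a b| ≤ D :=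
      le_iSup (fun p : _ × _ => ENNReal.ofReal |dist (f p.1) (f p.2) - geoDist14 r p.1 p.2|) (a, b)
    exact (ENNReal.ofReal_le_iff_le_toReal hT).mp h1
  set D' := D.toReal with hD'
  set A := f (x k)
  set B := f (x (k+1))
  set C := f (x (k + ((m:ℤ)+1)/2))
  have e1 := key (x (k+1)) (x k)
  have e2 := key (x (k + ((m:ℤ)+1)/2)) (x k)
  have e3 := key (x (k + ((m:ℤ)+1)/2)) (x (k+1))
  rw [hd1, Real.dist_eq] at e1
  rw [hd2, Real.dist_eq] at e2
  rw [hd3, Real.dist_eq] at e3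
  have hmain : 2 * π * r * ((m : ℝ) - 2) / (3 * m) ≤ D' := by
    have hgoal : 2 * π * r * ((m : ℝ) - 2) / (3 * m)
        = (2*(r*(π - π/m)) - r*(2*π/m))/3 := by
      field_simp; ring
    rw [hgoal]
    rcases h with ⟨h1, h2⟩ | ⟨h1, h2⟩
    · rw [abs_of_nonneg (by linarith : (0:ℝ) ≤ B - A)] at e1
      rw [abs_of_nonneg (by linarith : (0:ℝ) ≤ C - A)] at e2
      rw [abs_of_nonpos (by linarith : C - B ≤ (0:ℝ))] at e3
      have f1 := (abs_le.mp e1).2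
      have f2 := (abs_le.mp e2).1
      have f3 := (abs_le.mp e3).1
      linarith
    · rw [abs_of_nonpos (by linarith : B - A ≤ (0:ℝ))] at e1
      rw [abs_of_nonpos (by linarith : C - A ≤ (0:ℝ))] at e2
      rw [abs_of_nonneg (by linarith : (0:ℝ) ≤ C - B)] at e3
      have f1 := (abs_le.mp e1).2
      have f2 := (abs_le.mp e2).1
      have f3 := (abs_le.mp e3).1
      linarith
  calc ENNReal.ofReal (2 * π * r * ((m : ℝ) - 2) / (3 * m))
      ≤ ENNReal.ofReal D' := ENNReal.ofReal_le_ofReal hmain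
    _ = D := ENNReal.ofReal_toReal hT
end
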